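/- arXiv:nlin/0202051 — 6 statements merged into one kernel-verified Lean document; each statement's English description precedes it below -/
import Mathlib

section
/- Let n ≥ 1, let H, G : ℝⁿ × ℝⁿ → ℝ be C¹, and let z = (q,p) : I → ℝⁿ × ℝⁿ be a curve on an open interval I that solves Hamilton's equations for H, with H(q(t),p(t)) = 0 for all t ∈ I and G(q(t),p(t)) ≠ 0 for all t ∈ I. Let τ : I → J be a C¹ diffeomorphism onto an open interval J with τ'(t) = 1/G(q(t),p(t)) for all t ∈ I, and let t(·) : J → I be its inverse. Then the reparametrized curve w(τ) = (q(t(τ)), p(t(τ))) solves Hamilton's equations for the Hamiltonian H̃ = H·G on J. -/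
/-- A curve `(q, p)` on the set `I ⊆ ℝ` solves Hamilton's equations for the
Hamiltonian `K : ℝⁿ × ℝⁿ → ℝ`:  `qᵢ' = ∂K/∂pᵢ` and `pᵢ' = −∂K/∂qᵢ` on `I`. -/
def IsHamiltonianSolOn (n : ℕ) (K : (Fin n → ℝ) × (Fin n → ℝ) → ℝ)
    (q p : ℝ → (Fin n → ℝ)) (I : Set ℝ) : Prop :=
  ∀ t ∈ I, ∀ i : Fin n,
    HasDerivAt (fun t' => q t' i) (fderiv ℝ K (q t, p t) (0, Pi.single i 1)) t ∧
    HasDerivAt (fun t' => p t' i) (-(fderiv ℝ K (q t, p t) (Pi.single i 1, 0))) t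

/-
Along a trajectory on the level `H = 0`, the differential of `H·G` is `G · dH`, since the
term `H · dG` vanishes. On the other hand the inverse time change `σ` has derivative
`G(q, p)`, so by the chain rule the reparametrized curve has velocity `G · (∂H/∂p, −∂H/∂q)`,
which is exactly the Hamiltonian vector field of `H·G` at that point.
-/

open Set Filter

theorem fderiv_mul_of_eq_zero_left {E : Type*} [NormedAddCommGroup E] [NormedSpace ℝ E]
    {f g : E → ℝ} {x : E} (hf : DifferentiableAt ℝ f x) (hg : DifferentiableAt ℝ g x)
    (hfx : f x = 0) :
    fderiv ℝ (fun y => f y * g y) x = g x • fderiv ℝ f x := by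
  rw [fderiv_fun_mul hf hg, hfx, zero_smul, zero_add]

theorem IsHamiltonianSolOn.comp_of_fderiv_eq_smul {n : ℕ}
    {K K' : (Fin n → ℝ) × (Fin n → ℝ) → ℝ} {q p : ℝ → (Fin n → ℝ)} {I J : Set ℝ}
    {σ : ℝ → ℝ} {c : ℝ → ℝ}
    (hsol : IsHamiltonianSolOn n K q p I) (hσmaps : MapsTo σ J I)
    (hσ' : ∀ s ∈ J, HasDerivAt σ (c (σ s)) s)
    (hK' : ∀ t ∈ I, fderiv ℝ K' (q t, p t) = c t • fderiv ℝ K (q t, p t)) :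
    IsHamiltonianSolOn n K' (fun s => q (σ s)) (fun s => p (σ s)) J := by
  intro s hs i
  have htI : σ s ∈ I := hσmaps hs
  obtain ⟨hq, hp⟩ := hsol (σ s) htI i
  rw [hK' (σ s) htI]
  refine ⟨?_, ?_⟩
  · rw [smul_apply, smul_eq_mul, mul_comm]
    exact hq.comp s (hσ' s hs)
  · rw [smul_apply, smul_eq_mul, ← mul_neg, mul_comm]
    exact hp.comp s (hσ' s hs)

theorem reparam_hamiltonian_flow_general
    (n : ℕ)
    (H G : (Fin n → ℝ) × (Fin n → ℝ) → ℝ)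
    (hH : ContDiff ℝ 1 H) (hG : ContDiff ℝ 1 G)
    (I J : Set ℝ)
    (hJ : IsOpen J)
    (q p : ℝ → (Fin n → ℝ))
    (hsol : IsHamiltonianSolOn n H q p I)
    (hH0 : ∀ t ∈ I, H (q t, p t) = 0)
    (hG0 : ∀ t ∈ I, G (q t, p t) ≠ 0)
    (τ σ : ℝ → ℝ)
    (hσmaps : Set.MapsTo σ J I)
    (hτσ : ∀ s ∈ J, τ (σ s) = s)
    (hτ' : ∀ t ∈ I, HasDerivAt τ (1 / G (q t, p t)) t)
    (hσdiff : ∀ s ∈ J, DifferentiableAt ℝ σ s) :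
    IsHamiltonianSolOn n (fun z => H z * G z)
      (fun s => q (σ s)) (fun s => p (σ s)) J := by
  have hσ' : ∀ s ∈ J, HasDerivAt σ (G (q (σ s), p (σ s))) s := fun s hs => by
    have hτ's : HasDerivAt τ (G (q (σ s), p (σ s)))⁻¹ (σ s) := by
      simpa only [one_div] using hτ' (σ s) (hσmaps hs)
    simpa only [inv_inv] using hτ's.of_local_left_inverse (hσdiff s hs).continuousAt
      (inv_ne_zero (hG0 (σ s) (hσmaps hs))) (eventually_of_mem (hJ.mem_nhds hs) hτσ)
  exact hsol.comp_of_fderiv_eq_smul (c := fun t => G (q t, p t)) hσmaps hσ' fun t ht =>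
    fderiv_mul_of_eq_zero_left (hH.differentiable one_ne_zero _)
      (hG.differentiable one_ne_zero _) (hH0 t ht)

/-- **Time reparametrization of Hamiltonian flows on a zero energy level.**
If `(q,p)` solves Hamilton's equations for `H` on the open interval `I`, stays
on the level `H = 0`, `G ≠ 0` along the trajectory, and `τ : I → J` is a C¹
diffeomorphism with `τ'(t) = 1/G(q(t),p(t))` and inverse `σ : J → I`, then the
reparametrized curve `s ↦ (q(σ(s)), p(σ(s)))` solves Hamilton's equations for
the Hamiltonian `H̃ = H·G` on `J`. -/
theorem reparam_hamiltonian_flow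
    (n : ℕ) (hn : 1 ≤ n)
    (H G : (Fin n → ℝ) × (Fin n → ℝ) → ℝ)
    (hH : ContDiff ℝ 1 H) (hG : ContDiff ℝ 1 G)
    (I J : Set ℝ) (hI : IsOpen I) (hIconn : I.OrdConnected) (hIne : I.Nonempty)
    (hJ : IsOpen J) (hJconn : J.OrdConnected)
    (q p : ℝ → (Fin n → ℝ))
    (hsol : IsHamiltonianSolOn n H q p I)
    (hH0 : ∀ t ∈ I, H (q t, p t) = 0)
    (hG0 : ∀ t ∈ I, G (q t, p t) ≠ 0)
    (τ σ : ℝ → ℝ)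
    (hτmaps : Set.MapsTo τ I J) (hσmaps : Set.MapsTo σ J I)
    (hστ : ∀ t ∈ I, σ (τ t) = t) (hτσ : ∀ s ∈ J, τ (σ s) = s)
    (hτ' : ∀ t ∈ I, HasDerivAt τ (1 / G (q t, p t)) t)
    (hσdiff : ∀ s ∈ J, DifferentiableAt ℝ σ s) :
    IsHamiltonianSolOn n (fun z => H z * G z)
      (fun s => q (σ s)) (fun s => p (σ s)) J :=
  reparam_hamiltonian_flow_general n H G hH hG I J hJ q p hsol hH0 hG0 τ σ hσmaps hτσ hτ' hσdiff
end

section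
/- Let n ≥ 1, let H : ℝⁿ × ℝⁿ → ℝ be C¹, let α ∈ ℝ, and set G = 2(H + α). Let z = (q,p) : I → ℝⁿ × ℝⁿ be a curve on an open interval I that solves Hamilton's equations for H, with H(q(t),p(t)) = 0 for all t ∈ I and α ≠ 0. Let τ : I → J be a C¹ diffeomorphism onto an open interval J with τ'(t) = 1/G(q(t),p(t)) for all t ∈ I, and let t(·) : J → I be its inverse. Then the reparametrized curve w(τ) = (q(t(τ)), p(t(τ))) solves Hamilton's equations for the Hamiltonian H̃ = (H + α)² on J. -/
/-!
In the new time `s` with `dt/ds = G`, the curve moves with velocity `G · X_H`, which is the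
Hamiltonian vector field of any `K` with `dK = G dH` along the orbit; `K = (H + α)²` qualifies
since `d(H + α)² = 2(H + α) dH = G dH`. That `dt/ds = G` comes from differentiating
`τ ∘ σ = id`: `τ'(σ s) · σ'(s) = 1`.
-/

open Filter Topology

theorem fderiv_add_const_sq {E : Type*} [NormedAddCommGroup E] [NormedSpace ℝ E]
    {H : E → ℝ} {z : E} (hH : DifferentiableAt ℝ H z) (α : ℝ) :
    fderiv ℝ (fun z => (H z + α) ^ 2) z = (2 * (H z + α)) • fderiv ℝ H z := by
  rw [fderiv_fun_pow 2 (hH.add_const α), fderiv_add_const]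
  congr 1
  norm_num
  ring

theorem HasDerivAt.of_local_right_inverse {τ σ : ℝ → ℝ} {τ' s : ℝ}
    (hτ : HasDerivAt τ τ' (σ s)) (hσ : DifferentiableAt ℝ σ s)
    (hinv : ∀ᶠ y in 𝓝 s, τ (σ y) = y) : HasDerivAt σ τ'⁻¹ s := by
  have hcomp : HasDerivAt id (τ' * _root_.deriv σ s) s :=
    (hτ.comp s hσ.hasDerivAt).congr_of_eventuallyEq (hinv.mono fun _ h => h.symm)
  have hprod : τ' * _root_.deriv σ s = 1 := hcomp.unique (hasDerivAt_id s)
  rw [← eq_inv_of_mul_eq_one_right hprod]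
  exact hσ.hasDerivAt

theorem IsHamiltonianSolOn.comp_of_hasDerivAt {n : ℕ}
    {H K g : (Fin n → ℝ) × (Fin n → ℝ) → ℝ} {q p : ℝ → (Fin n → ℝ)} {I J : Set ℝ}
    {σ : ℝ → ℝ} (hsol : IsHamiltonianSolOn n H q p I) (hσmaps : Set.MapsTo σ J I)
    (hσ : ∀ s ∈ J, HasDerivAt σ (g (q (σ s), p (σ s))) s)
    (hK : ∀ t ∈ I, fderiv ℝ K (q t, p t) = g (q t, p t) • fderiv ℝ H (q t, p t)) :
    IsHamiltonianSolOn n K (fun s => q (σ s)) (fun s => p (σ s)) J := by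
  intro s hs i
  obtain ⟨hq, hp⟩ := hsol (σ s) (hσmaps hs) i
  rw [hK (σ s) (hσmaps hs)]
  refine ⟨hq.scomp s (hσ s hs), (hp.scomp s (hσ s hs)).congr_deriv ?_⟩
  rw [smul_neg, smul_apply]

theorem reparam_hamiltonian_flow_sq_general
    (n : ℕ)
    (H : (Fin n → ℝ) × (Fin n → ℝ) → ℝ) (α : ℝ)
    (G : (Fin n → ℝ) × (Fin n → ℝ) → ℝ)
    (hGdef : G = fun z => 2 * (H z + α))
    (hH : ContDiff ℝ 1 H)
    (I J : Set ℝ)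
    (hJ : IsOpen J)
    (q p : ℝ → (Fin n → ℝ))
    (hsol : IsHamiltonianSolOn n H q p I)
    (τ σ : ℝ → ℝ)
    (hσmaps : Set.MapsTo σ J I)
    (hτσ : ∀ s ∈ J, τ (σ s) = s)
    (hτ' : ∀ t ∈ I, HasDerivAt τ (1 / G (q t, p t)) t)
    (hσdiff : ∀ s ∈ J, DifferentiableAt ℝ σ s) :
    IsHamiltonianSolOn n (fun z => (H z + α) ^ 2)
      (fun s => q (σ s)) (fun s => p (σ s)) J := by
  have hσ' : ∀ s ∈ J, HasDerivAt σ (G (q (σ s), p (σ s))) s := fun s hs => by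
    simpa only [one_div, inv_inv] using (hτ' (σ s) (hσmaps hs)).of_local_right_inverse
      (hσdiff s hs) (eventually_of_mem (hJ.mem_nhds hs) hτσ)
  refine hsol.comp_of_hasDerivAt hσmaps hσ' fun t _ => ?_
  rw [fderiv_add_const_sq (hH.differentiable one_ne_zero _), hGdef]

/-- **Time reparametrization with `G = 2(H+α)` gives the Hamiltonian `(H+α)²`.**
If `(q,p)` solves Hamilton's equations for `H` on the open interval `I`, stays
on the level `H = 0`, `α ≠ 0`, and `τ : I → J` is a C¹ diffeomorphism with
`τ'(t) = 1/G(q(t),p(t))` where `G = 2(H+α)`, with inverse `σ : J → I`, then the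
reparametrized curve `s ↦ (q(σ(s)), p(σ(s)))` solves Hamilton's equations for
the Hamiltonian `H̃ = (H+α)²` on `J`. -/
theorem reparam_hamiltonian_flow_sq
    (n : ℕ) (hn : 1 ≤ n)
    (H : (Fin n → ℝ) × (Fin n → ℝ) → ℝ) (α : ℝ) (hα : α ≠ 0)
    (G : (Fin n → ℝ) × (Fin n → ℝ) → ℝ)
    (hGdef : G = fun z => 2 * (H z + α))
    (hH : ContDiff ℝ 1 H)
    (I J : Set ℝ) (hI : IsOpen I) (hIconn : I.OrdConnected) (hIne : I.Nonempty)
    (hJ : IsOpen J) (hJconn : J.OrdConnected)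
    (q p : ℝ → (Fin n → ℝ))
    (hsol : IsHamiltonianSolOn n H q p I)
    (hH0 : ∀ t ∈ I, H (q t, p t) = 0)
    (τ σ : ℝ → ℝ)
    (hτmaps : Set.MapsTo τ I J) (hσmaps : Set.MapsTo σ J I)
    (hστ : ∀ t ∈ I, σ (τ t) = t) (hτσ : ∀ s ∈ J, τ (σ s) = s)
    (hτ' : ∀ t ∈ I, HasDerivAt τ (1 / G (q t, p t)) t)
    (hσdiff : ∀ s ∈ J, DifferentiableAt ℝ σ s) :
    IsHamiltonianSolOn n (fun z => (H z + α) ^ 2)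
      (fun s => q (σ s)) (fun s => p (σ s)) J :=
  reparam_hamiltonian_flow_sq_general n H α G hGdef hH I J hJ q p hsol τ σ hσmaps hτσ hτ' hσdiff
end

section
/- Let μ > 0 and h < 0, and consider the diagonal metric on ℝ² with coefficients E(x,y) = 2/(x² + y² − 2h)² and G(x,y) = 2/(μ(x² + y² − 2h)²) (note x² + y² − 2h > 0 everywhere since h < 0). Then the Gaussian curvature, given by the classical formula for orthogonal metrics K = −(1/(2√(EG)))·[ ∂/∂x( (∂G/∂x)/√(EG) ) + ∂/∂y( (∂E/∂y)/√(EG) ) ], satisfies K(x,y) = −(1−μ)(x² − y²) − 2h(1+μ) for all (x,y) ∈ ℝ². In particular K is a constant function on ℝ² if and only if μ = 1, in which case K ≡ −4h. -/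
/-!
Put `q = x² + y² − 2h > 0`. Then `√(EG) = 2/(√μ q²)`, and the two first-order quotients are
`(∂ₓG)/√(EG) = (−4/√μ)·x/q` and `(∂ᵧE)/√(EG) = −4√μ·y/q`. Each is of the form `k·t/(t² + a)`
with `a > 0`, whose derivative is `k(a − t²)/(t² + a)²`; multiplying by `−√μ q²/4` gives
`K = (q − 2x²) + μ(q − 2y²)`.
-/

/-- First metric coefficient `E(x,y) = 2/(x² + y² − 2h)²`. -/
noncomputable def Ecoef (h x y : ℝ) : ℝ := 2 / (x ^ 2 + y ^ 2 - 2 * h) ^ 2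

/-- Second metric coefficient `G(x,y) = 2/(μ(x² + y² − 2h)²)`. -/
noncomputable def Gcoef (μ h x y : ℝ) : ℝ := 2 / (μ * (x ^ 2 + y ^ 2 - 2 * h) ^ 2)

/-- Gaussian curvature of the orthogonal metric `ds² = E dx² + G dy²` by the
classical formula `K = −(1/(2√(EG)))·[∂ₓ((∂ₓG)/√(EG)) + ∂ᵧ((∂ᵧE)/√(EG))]`. -/
noncomputable def gaussCurv (μ h x y : ℝ) : ℝ :=
  -(1 / (2 * Real.sqrt (Ecoef h x y * Gcoef μ h x y)))
    * (deriv (fun x' => (deriv (fun x'' => Gcoef μ h x'' y) x')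
        / Real.sqrt (Ecoef h x' y * Gcoef μ h x' y)) x
      + deriv (fun y' => (deriv (fun y'' => Ecoef h x y'') y')
        / Real.sqrt (Ecoef h x y' * Gcoef μ h x y')) y)

lemma hasDerivAt_const_div_sq_add_const_sq (c : ℝ) {a : ℝ} (ha : 0 < a) (t : ℝ) :
    HasDerivAt (fun t => c / (t ^ 2 + a) ^ 2) (-4 * c * t / (t ^ 2 + a) ^ 3) t := by
  have hq : 0 < t ^ 2 + a := by positivity
  refine ((hasDerivAt_const t c).fun_div (((hasDerivAt_pow 2 t).add_const a).fun_pow 2)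
    (pow_ne_zero 2 hq.ne')).congr_deriv ?_
  norm_num
  field_simp
  ring

lemma hasDerivAt_mul_div_sq_add_const (k : ℝ) {a : ℝ} (ha : 0 < a) (t : ℝ) :
    HasDerivAt (fun t => k * t / (t ^ 2 + a)) (k * (a - t ^ 2) / (t ^ 2 + a) ^ 2) t := by
  have hq : 0 < t ^ 2 + a := by positivity
  refine (((hasDerivAt_id t).const_mul k).fun_div ((hasDerivAt_pow 2 t).add_const a)
    hq.ne').congr_deriv ?_
  norm_num
  field_simp
  ring

lemma sqrt_Ecoef_mul_Gcoef {μ h : ℝ} (hμ : 0 < μ) (hh : h < 0) (x y : ℝ) :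
    √(Ecoef h x y * Gcoef μ h x y) = 2 / (√μ * (x ^ 2 + y ^ 2 - 2 * h) ^ 2) := by
  have hq : 0 < x ^ 2 + y ^ 2 - 2 * h := by nlinarith [sq_nonneg x, sq_nonneg y]
  rw [← Real.sqrt_sq (by positivity : 0 ≤ 2 / (√μ * (x ^ 2 + y ^ 2 - 2 * h) ^ 2))]
  congr 1
  unfold Ecoef Gcoef
  field_simp
  rw [Real.sq_sqrt hμ.le]

lemma deriv_Gcoef_div_sqrt_eq {μ h : ℝ} (hμ : 0 < μ) (hh : h < 0) (y : ℝ) :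
    (fun x => deriv (fun x' => Gcoef μ h x' y) x / √(Ecoef h x y * Gcoef μ h x y))
      = fun x => -4 / √μ * x / (x ^ 2 + (y ^ 2 - 2 * h)) := by
  have ha : 0 < y ^ 2 - 2 * h := by nlinarith [sq_nonneg y]
  have hG : (fun x => Gcoef μ h x y) = fun x => 2 / μ / (x ^ 2 + (y ^ 2 - 2 * h)) ^ 2 := by
    simp only [Gcoef, div_div, add_sub_assoc]
  ext x
  rw [sqrt_Ecoef_mul_Gcoef hμ hh, hG, (hasDerivAt_const_div_sq_add_const_sq _ ha x).deriv]
  field_simp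
  rw [Real.sq_sqrt hμ.le]
  ring

lemma deriv_Ecoef_div_sqrt_eq {μ h : ℝ} (hμ : 0 < μ) (hh : h < 0) (x : ℝ) :
    (fun y => deriv (fun y' => Ecoef h x y') y / √(Ecoef h x y * Gcoef μ h x y))
      = fun y => -4 * √μ * y / (y ^ 2 + (x ^ 2 - 2 * h)) := by
  have ha : 0 < x ^ 2 - 2 * h := by nlinarith [sq_nonneg x]
  have hE : (fun y => Ecoef h x y) = fun y => 2 / (y ^ 2 + (x ^ 2 - 2 * h)) ^ 2 := by
    ext y; rw [Ecoef]; ring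
  ext y
  rw [sqrt_Ecoef_mul_Gcoef hμ hh, hE, (hasDerivAt_const_div_sq_add_const_sq _ ha y).deriv]
  field_simp
  ring

theorem gaussCurv_eq {μ h : ℝ} (hμ : 0 < μ) (hh : h < 0) (x y : ℝ) :
    gaussCurv μ h x y = -(1 - μ) * (x ^ 2 - y ^ 2) - 2 * h * (1 + μ) := by
  have hx : 0 < x ^ 2 - 2 * h := by nlinarith [sq_nonneg x]
  have hy : 0 < y ^ 2 - 2 * h := by nlinarith [sq_nonneg y]
  rw [gaussCurv, deriv_Gcoef_div_sqrt_eq hμ hh, deriv_Ecoef_div_sqrt_eq hμ hh,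
    sqrt_Ecoef_mul_Gcoef hμ hh, (hasDerivAt_mul_div_sq_add_const _ hy x).deriv,
    (hasDerivAt_mul_div_sq_add_const _ hx y).deriv]
  field_simp
  rw [Real.sq_sqrt hμ.le]
  ring

/-- **Gaussian curvature of the metric
`g = (2/(x² + y² − 2h)²)·diag(1, 1/μ)`:** one has
`K(x,y) = −(1−μ)(x² − y²) − 2h(1+μ)`; in particular `K` is constant iff
`μ = 1`, in which case `K ≡ −4h`. -/
theorem gauss_curvature_akp_metric (μ h : ℝ) (hμ : 0 < μ) (hh : h < 0) :
    (∀ x y : ℝ, gaussCurv μ h x y = -(1 - μ) * (x ^ 2 - y ^ 2) - 2 * h * (1 + μ)) ∧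
    ((∃ c : ℝ, ∀ x y : ℝ, gaussCurv μ h x y = c) ↔ μ = 1) ∧
    (μ = 1 → ∀ x y : ℝ, gaussCurv μ h x y = -4 * h) := by
  have hK := gaussCurv_eq hμ hh
  have hK_one : μ = 1 → ∀ x y : ℝ, gaussCurv μ h x y = -4 * h := by
    rintro rfl x y
    rw [hK]
    ring
  refine ⟨hK, ⟨?_, fun hμ₁ => ⟨-4 * h, hK_one hμ₁⟩⟩, hK_one⟩
  rintro ⟨c, hc⟩
  have hK₁₀ := hK 1 0
  have hK₀₀ := hK 0 0
  rw [hc] at hK₁₀ hK₀₀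
  linarith
end

section
/- Let μ > 1 and h < 0. Suppose a : ℝ → ℝ is real-analytic and satisfies simultaneously, for all x ∈ ℝ, the two differential equations a''(x) = a(x)/(5(x² − 2h)) and 3(x² − 2h)·a''(x) + 12x·a'(x) + 2(2 + μ)·a(x) = 0. Then a is identically zero. -/
/-!
Eliminating `a''` between the two equations leaves the first-order Euler equation
`x a' + γ a = 0` with `γ = (2(2 + μ) + 3/5)/12 > 0`. On `(0, ∞)` this says that `x ^ γ * a x`
is constant; since `a` is bounded near `0` and `x ^ γ → 0`, the constant is `0`. So `a` vanishes
on `(0, ∞)`, and by the identity theorem for analytic functions it vanishes everywhere.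
-/

open Set Filter Topology

theorem mul_deriv_add_mul_eq_zero_of_two_odes {μ h : ℝ} (hh : h < 0) {a : ℝ → ℝ}
    (heq1 : ∀ x : ℝ, deriv (deriv a) x = a x / (5 * (x ^ 2 - 2 * h)))
    (heq2 : ∀ x : ℝ, 3 * (x ^ 2 - 2 * h) * deriv (deriv a) x
      + 12 * x * deriv a x + 2 * (2 + μ) * a x = 0) (x : ℝ) :
    x * deriv a x + (2 * (2 + μ) + 3 / 5) / 12 * a x = 0 := by
  have hx : x ^ 2 - 2 * h ≠ 0 := by nlinarith [sq_nonneg x]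
  have hsecond : 3 * (x ^ 2 - 2 * h) * deriv (deriv a) x = 3 / 5 * a x := by
    rw [heq1 x]
    field_simp
  linarith [heq2 x]

theorem hasDerivAt_rpow_mul_of_mul_deriv_add_mul_eq_zero {f : ℝ → ℝ} {γ x : ℝ} (hx : 0 < x)
    (hf : DifferentiableAt ℝ f x) (hode : x * deriv f x + γ * f x = 0) :
    HasDerivAt (fun y => y ^ γ * f y) 0 x := by
  refine ((Real.hasDerivAt_rpow_const (p := γ) (Or.inl hx.ne')).mul hf.hasDerivAt).congr_deriv ?_
  have hpow : x ^ γ = x * x ^ (γ - 1) := by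
    rw [Real.rpow_sub hx, Real.rpow_one]
    field_simp
  rw [hpow]
  linear_combination x ^ (γ - 1) * hode

theorem eqOn_zero_Ioi_of_mul_deriv_add_mul_eq_zero {f : ℝ → ℝ} {γ : ℝ} (hγ : 0 < γ)
    (hf : ∀ x ∈ Ioi (0 : ℝ), DifferentiableAt ℝ f x) (hf₀ : ContinuousWithinAt f (Ioi 0) 0)
    (hode : ∀ x ∈ Ioi (0 : ℝ), x * deriv f x + γ * f x = 0) :
    EqOn f 0 (Ioi 0) := by
  have hderiv (x : ℝ) (hx : x ∈ Ioi (0 : ℝ)) : HasDerivAt (fun y => y ^ γ * f y) 0 x :=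
    hasDerivAt_rpow_mul_of_mul_deriv_add_mul_eq_zero hx (hf x hx) (hode x hx)
  obtain ⟨K, hK⟩ := isOpen_Ioi.exists_is_const_of_deriv_eq_zero isPreconnected_Ioi
    (fun x hx => (hderiv x hx).differentiableAt.differentiableWithinAt)
    (fun x hx => (hderiv x hx).deriv)
  have hto_zero : Tendsto (fun y => y ^ γ * f y) (𝓝[>] 0) (𝓝 0) := by
    have hpow : Tendsto (fun y : ℝ => y ^ γ) (𝓝[>] 0) (𝓝 ((0 : ℝ) ^ γ)) :=
      (Real.continuousAt_rpow_const 0 γ (Or.inr hγ.le)).continuousWithinAt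
    simpa [Real.zero_rpow hγ.ne'] using hpow.mul hf₀.tendsto
  have hto_K : Tendsto (fun y => y ^ γ * f y) (𝓝[>] 0) (𝓝 K) :=
    tendsto_const_nhds.congr' (eventually_nhdsWithin_of_forall fun x hx => (hK x hx).symm)
  have hK₀ : K = 0 := tendsto_nhds_unique hto_K hto_zero
  intro x hx
  have hxγ : x ^ γ ≠ 0 := (Real.rpow_pos_of_pos hx γ).ne'
  simpa [hK₀, hxγ] using hK x hx

/-- **An analytic function satisfying two incompatible second-order ODEs must
vanish.**  Let `μ > 1` and `h < 0`.  If `a : ℝ → ℝ` is real-analytic and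
satisfies both `a''(x) = a(x)/(5(x² − 2h))` and
`3(x² − 2h)a''(x) + 12x·a'(x) + 2(2+μ)a(x) = 0` for all `x ∈ ℝ`, then `a ≡ 0`. -/
theorem analytic_solution_of_two_odes_vanishes
    (μ h : ℝ) (hμ : 1 < μ) (hh : h < 0)
    (a : ℝ → ℝ) (ha : ∀ x : ℝ, AnalyticAt ℝ a x)
    (heq1 : ∀ x : ℝ, deriv (deriv a) x = a x / (5 * (x ^ 2 - 2 * h)))
    (heq2 : ∀ x : ℝ, 3 * (x ^ 2 - 2 * h) * deriv (deriv a) x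
      + 12 * x * deriv a x + 2 * (2 + μ) * a x = 0) :
    ∀ x : ℝ, a x = 0 := by
  have hdiff : Differentiable ℝ a := fun x => (ha x).differentiableAt
  have hγ : 0 < (2 * (2 + μ) + 3 / 5) / 12 := by linarith
  have hpos : EqOn a 0 (Ioi 0) :=
    eqOn_zero_Ioi_of_mul_deriv_add_mul_eq_zero hγ (fun x _ => hdiff x)
      hdiff.continuous.continuousWithinAt
      (fun x _ => mul_deriv_add_mul_eq_zero_of_two_odes hh heq1 heq2 x)
  have hnear_one : a =ᶠ[𝓝 1] 0 := eventually_of_mem (Ioi_mem_nhds one_pos) hpos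
  exact congrFun (AnalyticOnNhd.eq_of_eventuallyEq (fun x _ => ha x) analyticOnNhd_const hnear_one)
end

section
/- Let μ > 1 and h < 0. Suppose ξ : ℝ² → ℝ is real-analytic and satisfies, for all (x,y) ∈ ℝ², both the consistency equation ∂²ξ/∂x²(x,y) = −μ·∂²ξ/∂y²(x,y) and the second-order equation 2μ(x² + y² − 2h)·∂²ξ/∂y²(x,y) − 4μy·∂ξ/∂y(x,y) + 4ξ(x,y) = 0. Then ξ is identically zero on ℝ². -/
/-- Partial derivative in the first variable of a curried function `ℝ → ℝ → ℝ`. -/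
noncomputable def pdx (f : ℝ → ℝ → ℝ) : ℝ → ℝ → ℝ :=
  fun x y => deriv (fun x' => f x' y) x

/-- Partial derivative in the second variable of a curried function `ℝ → ℝ → ℝ`. -/
noncomputable def pdy (f : ℝ → ℝ → ℝ) : ℝ → ℝ → ℝ :=
  fun x y => deriv (fun y' => f x y') y

section KillingAux

noncomputable def px (f : ℝ × ℝ → ℝ) : ℝ × ℝ → ℝ := fun p => fderiv ℝ f p (1, 0)
noncomputable def py (f : ℝ × ℝ → ℝ) : ℝ × ℝ → ℝ := fun p => fderiv ℝ f p (0, 1)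

open Real Set Filter Topology

lemma smooth_pv {f : ℝ × ℝ → ℝ} (hf : ContDiff ℝ (⊤ : ℕ∞) f) (v : ℝ × ℝ) :
    ContDiff ℝ (⊤ : ℕ∞) (fun p => fderiv ℝ f p v) := by
  have h1 : ContDiff ℝ (⊤ : ℕ∞) (fderiv ℝ f) := hf.fderiv_right (by simp)
  exact h1.clm_apply contDiff_const

lemma smooth_px {f : ℝ × ℝ → ℝ} (hf : ContDiff ℝ (⊤ : ℕ∞) f) : ContDiff ℝ (⊤ : ℕ∞) (px f) :=
  smooth_pv hf _

lemma smooth_py {f : ℝ × ℝ → ℝ} (hf : ContDiff ℝ (⊤ : ℕ∞) f) : ContDiff ℝ (⊤ : ℕ∞) (py f) :=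
  smooth_pv hf _

lemma hasDerivAt_x {f : ℝ × ℝ → ℝ} (hf : ContDiff ℝ (⊤ : ℕ∞) f) (x y : ℝ) :
    HasDerivAt (fun x' => f (x', y)) (px f (x, y)) x := by
  have hD : HasFDerivAt f (fderiv ℝ f (x, y)) (x, y) :=
    (hf.differentiable (by simp) (x, y)).hasFDerivAt
  have hc : HasDerivAt (fun x' : ℝ => (x', y)) ((1 : ℝ), (0 : ℝ)) x := by
    simpa using ((hasDerivAt_id x).prodMk (hasDerivAt_const x y))
  exact hD.comp_hasDerivAt x hc

lemma hasDerivAt_y {f : ℝ × ℝ → ℝ} (hf : ContDiff ℝ (⊤ : ℕ∞) f) (x y : ℝ) :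
    HasDerivAt (fun y' => f (x, y')) (py f (x, y)) y := by
  have hD : HasFDerivAt f (fderiv ℝ f (x, y)) (x, y) :=
    (hf.differentiable (by simp) (x, y)).hasFDerivAt
  have hc : HasDerivAt (fun y' : ℝ => (x, y')) ((0 : ℝ), (1 : ℝ)) y := by
    simpa using ((hasDerivAt_const y x).prodMk (hasDerivAt_id y))
  exact hD.comp_hasDerivAt y hc

lemma fderiv_pv {f : ℝ × ℝ → ℝ} (hf : ContDiff ℝ (⊤ : ℕ∞) f) (v w : ℝ × ℝ) (p : ℝ × ℝ) :
    fderiv ℝ (fun q => fderiv ℝ f q v) p w = fderiv ℝ (fderiv ℝ f) p w v := by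
  have h1 : ContDiff ℝ (⊤ : ℕ∞) (fderiv ℝ f) := hf.fderiv_right (by simp)
  have hd : DifferentiableAt ℝ (fderiv ℝ f) p := h1.differentiable (by simp) p
  rw [fderiv_clm_apply hd (differentiableAt_const v)]
  simp

lemma swap_pxpy {f : ℝ × ℝ → ℝ} (hf : ContDiff ℝ (⊤ : ℕ∞) f) : px (py f) = py (px f) := by
  funext p
  have h1 : ContDiff ℝ (⊤ : ℕ∞) (fderiv ℝ f) := hf.fderiv_right (by simp)
  have hsymm : ∀ v w : ℝ × ℝ,
      fderiv ℝ (fderiv ℝ f) p v w = fderiv ℝ (fderiv ℝ f) p w v := fun v w =>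
    second_derivative_symmetric (fun y => (hf.differentiable (by simp) y).hasFDerivAt)
      ((h1.differentiable (by simp) p).hasFDerivAt) v w
  show fderiv ℝ (py f) p (1,0) = fderiv ℝ (px f) p (0,1)
  unfold px py
  rw [fderiv_pv hf, fderiv_pv hf, hsymm]

lemma px_const_mul {g : ℝ × ℝ → ℝ} (hg : ContDiff ℝ (⊤ : ℕ∞) g) (c : ℝ) :
    px (fun q => c * g q) = fun p => c * px g p := by
  funext p
  show fderiv ℝ (fun q => c * g q) p (1,0) = _
  rw [fderiv_const_mul (hg.differentiable (by simp) p) c]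
  simp [px]

lemma py_const_mul {g : ℝ × ℝ → ℝ} (hg : ContDiff ℝ (⊤ : ℕ∞) g) (c : ℝ) :
    py (fun q => c * g q) = fun p => c * py g p := by
  funext p
  show fderiv ℝ (fun q => c * g q) p (0,1) = _
  rw [fderiv_const_mul (hg.differentiable (by simp) p) c]
  simp [py]

lemma deriv_zero_of_zero {φ : ℝ → ℝ} {d y : ℝ} (h : HasDerivAt φ d y)
    (hz : ∀ t, φ t = 0) : d = 0 := by
  have hφ : φ = fun _ => 0 := funext hz
  rw [hφ] at h
  exact h.unique (hasDerivAt_const y 0)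
lemma fderiv_decomp {A : ℝ × ℝ → ℝ} {p : ℝ × ℝ} (hA : DifferentiableAt ℝ A p) (a b : ℝ) :
    fderiv ℝ A p (a, b) = a * px A p + b * py A p := by
  have : ((a, b) : ℝ × ℝ) = a • ((1:ℝ), (0:ℝ)) + b • ((0:ℝ), (1:ℝ)) := by
    simp [Prod.ext_iff]
  rw [this, map_add, map_smul, map_smul]
  simp [px, py, smul_eq_mul]

lemma euler_vanish (μ : ℝ) (hμ : 1 < μ) (A : ℝ × ℝ → ℝ) (hA : ContDiff ℝ (⊤ : ℕ∞) A)
    (hE : ∀ p : ℝ × ℝ, 2 * p.1 * px A p + 2 * μ * p.2 * py A p + (μ + 1) * A p = 0) :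
    ∀ p : ℝ × ℝ, A p = 0 := by
  rintro ⟨x₀, y₀⟩
  set q : ℝ := (μ + 1) / 2 with hq
  have hq0 : 0 < q := by rw [hq]; linarith
  set c : ℝ → ℝ × ℝ := fun t => (t * x₀, t ^ μ * y₀) with hc
  set G : ℝ → ℝ := fun t => A (c t) * t ^ q with hG
  have hder : ∀ t : ℝ, 0 < t → HasDerivAt G 0 t := by
    intro t ht
    have ht' : t ≠ 0 := ne_of_gt ht
    have hcderiv : HasDerivAt c (x₀, μ * t ^ (μ - 1) * y₀) t := by
      have h1 : HasDerivAt (fun t : ℝ => t * x₀) x₀ t := by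
        simpa using (hasDerivAt_id t).mul_const x₀
      have h2 : HasDerivAt (fun t : ℝ => t ^ μ * y₀) (μ * t ^ (μ - 1) * y₀) t :=
        (Real.hasDerivAt_rpow_const (Or.inl ht')).mul_const y₀
      exact h1.prodMk h2
    have hAd : HasFDerivAt A (fderiv ℝ A (c t)) (c t) :=
      (hA.differentiable (by simp) (c t)).hasFDerivAt
    have hγ : HasDerivAt (fun s => A (c s))
        (x₀ * px A (c t) + μ * t ^ (μ - 1) * y₀ * py A (c t)) t := by
      have := hAd.comp_hasDerivAt t hcderiv
      rwa [fderiv_decomp (hA.differentiable (by simp) (c t))] at this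
    have hpow : HasDerivAt (fun s : ℝ => s ^ q) (q * t ^ (q - 1)) t :=
      Real.hasDerivAt_rpow_const (Or.inl ht')
    have hGd := hγ.mul hpow
    have htm : t * t ^ (μ - 1) = t ^ μ := by
      have h1 : t ^ (1 + (μ - 1)) = t ^ (1:ℝ) * t ^ (μ - 1) := Real.rpow_add ht 1 (μ - 1)
      rw [Real.rpow_one] at h1
      rw [← h1]; norm_num
    have htq : t * t ^ (q - 1) = t ^ q := by
      have h1 : t ^ (1 + (q - 1)) = t ^ (1:ℝ) * t ^ (q - 1) := Real.rpow_add ht 1 (q - 1)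
      rw [Real.rpow_one] at h1
      rw [← h1]; norm_num
    have key : t * (x₀ * px A (c t) + μ * t ^ (μ - 1) * y₀ * py A (c t)) = -q * A (c t) := by
      have h := hE (c t)
      have hct1 : (c t).1 = t * x₀ := rfl
      have hct2 : (c t).2 = t ^ μ * y₀ := rfl
      rw [hct1, hct2] at h
      rw [hq]
      linear_combination (1/2) * h + μ * y₀ * py A (c t) * htm
    have hzero : (x₀ * px A (c t) + μ * t ^ (μ - 1) * y₀ * py A (c t)) * t ^ q
        + A (c t) * (q * t ^ (q - 1)) = 0 := by
      apply mul_left_cancel₀ ht'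
      rw [mul_zero]
      linear_combination (t ^ q) * key + (q * A (c t)) * htq
    exact hzero ▸ hGd
  -- G is constant on [ε, 1]
  have hconst : ∀ ε ∈ Ioc (0:ℝ) 1, G 1 = G ε := by
    intro ε hε
    have h := constant_of_has_deriv_right_zero (f := G) (a := ε) (b := 1)
      (fun t ht => ((hder t (lt_of_lt_of_le hε.1 ht.1)).continuousAt).continuousWithinAt)
      (fun t ht => (hder t (lt_of_lt_of_le hε.1 ht.1)).hasDerivWithinAt)
    exact h 1 (right_mem_Icc.mpr hε.2)
  -- limit as ε → 0⁺
  have hccont : ContinuousAt c 0 := by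
    apply ContinuousAt.prodMk
    · exact (continuous_id.mul continuous_const).continuousAt
    · exact (Real.continuousAt_rpow_const 0 μ (Or.inr (by linarith))).mul
        continuousAt_const
  have hGcont : ContinuousAt G 0 :=
    ((hA.continuous.continuousAt).comp hccont).mul
      (Real.continuousAt_rpow_const 0 q (Or.inr hq0.le))
  have hG0 : G 0 = 0 := by
    simp [hG, Real.zero_rpow (ne_of_gt hq0)]
  have hne : (𝓝[Ioc (0:ℝ) 1] 0).NeBot := by
    rw [← mem_closure_iff_nhdsWithin_neBot, closure_Ioc (by norm_num : (0:ℝ) ≠ 1)]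
    exact ⟨le_refl 0, by norm_num⟩
  have h1 : Tendsto G (𝓝[Ioc (0:ℝ) 1] 0) (𝓝 (G 0)) := hGcont.continuousWithinAt
  rw [hG0] at h1
  have h2 : Tendsto G (𝓝[Ioc (0:ℝ) 1] 0) (𝓝 (G 1)) := by
    have heq : G =ᶠ[𝓝[Ioc (0:ℝ) 1] 0] fun _ => G 1 := by
      filter_upwards [self_mem_nhdsWithin] with ε hε
      exact (hconst ε hε).symm
    exact Tendsto.congr' heq.symm tendsto_const_nhds
  have hG1 : G 1 = 0 := tendsto_nhds_unique h2 h1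
  have : A (c 1) * (1:ℝ) ^ q = 0 := hG1
  simpa [hc, Real.one_rpow] using this

private theorem first_killing_aux
    (μ h : ℝ) (hμ : 1 < μ) (hh : h < 0)
    (ξ : ℝ → ℝ → ℝ)
    (hξ : ∀ p : ℝ × ℝ, AnalyticAt ℝ (fun q : ℝ × ℝ => ξ q.1 q.2) p)
    (hconsistency : ∀ x y : ℝ,
      deriv (fun x' => deriv (fun x'' => ξ x'' y) x') x
        = -μ * deriv (fun y' => deriv (fun y'' => ξ x y'') y') y)
    (heq : ∀ x y : ℝ,
      2 * μ * (x ^ 2 + y ^ 2 - 2 * h) * deriv (fun y' => deriv (fun y'' => ξ x y'') y') y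
        - 4 * μ * y * deriv (fun y' => ξ x y') y + 4 * ξ x y = 0) :
    ∀ x y : ℝ, ξ x y = 0 := by
  set F : ℝ × ℝ → ℝ := fun q => ξ q.1 q.2 with hFdef
  have hF : ContDiff ℝ (⊤ : ℕ∞) F := contDiff_iff_contDiffAt.mpr fun p => (hξ p).contDiffAt
  set F1 : ℝ × ℝ → ℝ := py F with hF1def
  have hF1 : ContDiff ℝ (⊤ : ℕ∞) F1 := smooth_py hF
  set F2 : ℝ × ℝ → ℝ := py F1 with hF2def
  have hF2 : ContDiff ℝ (⊤ : ℕ∞) F2 := smooth_py hF1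
  set F3 : ℝ × ℝ → ℝ := py F2 with hF3def
  have hF3 : ContDiff ℝ (⊤ : ℕ∞) F3 := smooth_py hF2
  set W : ℝ × ℝ → ℝ := px F1 with hWdef
  have hW : ContDiff ℝ (⊤ : ℕ∞) W := smooth_px hF1
  set A : ℝ × ℝ → ℝ := px W with hAdef
  have hA : ContDiff ℝ (⊤ : ℕ∞) A := smooth_px hW
  set Ay : ℝ × ℝ → ℝ := py A with hAydef
  have hAy : ContDiff ℝ (⊤ : ℕ∞) Ay := smooth_py hA
  set Ayy : ℝ × ℝ → ℝ := py Ay with hAyydef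
  have hAyy : ContDiff ℝ (⊤ : ℕ∞) Ayy := smooth_py hAy
  set Ax : ℝ × ℝ → ℝ := px A with hAxdef
  set Bx : ℝ × ℝ → ℝ := px F3 with hBxdef
  have hBx : ContDiff ℝ (⊤ : ℕ∞) Bx := smooth_px hF3
  set Bxx : ℝ × ℝ → ℝ := px Bx with hBxxdef
  -- conversions of curried derivatives
  have hpdy1 : ∀ x y : ℝ, deriv (fun y' => ξ x y') y = F1 (x, y) := fun x y =>
    (hasDerivAt_y hF x y).deriv
  have hpdy2 : ∀ x y : ℝ, deriv (fun y' => deriv (fun y'' => ξ x y'') y') y = F2 (x, y) := by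
    intro x y
    have e : (fun y' => deriv (fun y'' => ξ x y'') y') = fun y' => F1 (x, y') :=
      funext fun y' => hpdy1 x y'
    rw [e]
    exact (hasDerivAt_y hF1 x y).deriv
  have hpdx1 : ∀ x y : ℝ, deriv (fun x' => ξ x' y) x = px F (x, y) := fun x y =>
    (hasDerivAt_x hF x y).deriv
  have hpdx2 : ∀ x y : ℝ, deriv (fun x' => deriv (fun x'' => ξ x'' y) x') x
      = px (px F) (x, y) := by
    intro x y
    have e : (fun x' => deriv (fun x'' => ξ x'' y) x') = fun x' => px F (x', y) :=
      funext fun x' => hpdx1 x' y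
    rw [e]
    exact (hasDerivAt_x (smooth_px hF) x y).deriv
  -- uncurried hypotheses
  have H : ∀ x y : ℝ,
      2 * μ * (x ^ 2 + y ^ 2 - 2 * h) * F2 (x, y) - 4 * μ * y * F1 (x, y)
        + 4 * F (x, y) = 0 := by
    intro x y
    have := heq x y
    rwa [hpdy2, hpdy1] at this
  have C : ∀ x y : ℝ, px (px F) (x, y) = -μ * F2 (x, y) := by
    intro x y
    have := hconsistency x y
    rwa [hpdx2, hpdy2] at this
  -- step S : μ D F3 = 2(μ-1) F1
  have S : ∀ x y : ℝ,
      μ * (x ^ 2 + y ^ 2 - 2 * h) * F3 (x, y) = 2 * (μ - 1) * F1 (x, y) := by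
    intro x y
    have d0 : HasDerivAt (fun y' => F (x, y')) (F1 (x, y)) y := hasDerivAt_y hF x y
    have d1 : HasDerivAt (fun y' => F1 (x, y')) (F2 (x, y)) y := hasDerivAt_y hF1 x y
    have d2 : HasDerivAt (fun y' => F2 (x, y')) (F3 (x, y)) y := hasDerivAt_y hF2 x y
    have hq2 : HasDerivAt (fun y' : ℝ => y' ^ 2) (2 * y) y := by
      simpa using hasDerivAt_pow 2 y
    have hpoly : HasDerivAt (fun y' : ℝ => x ^ 2 + y' ^ 2 - 2 * h) (2 * y) y :=
      (hq2.const_add (x ^ 2)).sub_const (2 * h)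
    have big := (((hpoly.const_mul (2 * μ)).mul d2).sub
      (((hasDerivAt_id y).const_mul (4 * μ)).mul d1)).add (d0.const_mul 4)
    have DD := deriv_zero_of_zero big (fun t => H x t)
    simp only [id_eq] at DD
    linear_combination DD / 2
  -- step C1 : A = -μ F3
  have hW2 : W = py (px F) := by rw [hWdef, hF1def]; exact swap_pxpy hF
  have hA2 : A = py (px (px F)) := by rw [hAdef, hW2]; exact swap_pxpy (smooth_px hF)
  have hCfun : px (px F) = fun p => -μ * F2 p := funext fun p => C p.1 p.2
  have hAfun : A = fun p => -μ * F3 p := by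
    rw [hA2, hCfun, py_const_mul hF2 (-μ), ← hF3def]
  have C1 : ∀ p : ℝ × ℝ, A p = -μ * F3 p := fun p => congrFun hAfun p
  -- step P1
  have P1 : ∀ x y : ℝ,
      A (x, y) * (x ^ 2 + y ^ 2 - 2 * h) = -2 * (μ - 1) * F1 (x, y) := by
    intro x y
    linear_combination (x ^ 2 + y ^ 2 - 2 * h) * C1 (x, y) - S x y
  -- step P1y
  have P1y : ∀ x y : ℝ,
      Ay (x, y) * (x ^ 2 + y ^ 2 - 2 * h) + 2 * y * A (x, y)
        + 2 * (μ - 1) * F2 (x, y) = 0 := by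
    intro x y
    have d1 : HasDerivAt (fun y' => F1 (x, y')) (F2 (x, y)) y := hasDerivAt_y hF1 x y
    have dA : HasDerivAt (fun y' => A (x, y')) (Ay (x, y)) y := hasDerivAt_y hA x y
    have hq2 : HasDerivAt (fun y' : ℝ => y' ^ 2) (2 * y) y := by
      simpa using hasDerivAt_pow 2 y
    have hpoly : HasDerivAt (fun y' : ℝ => x ^ 2 + y' ^ 2 - 2 * h) (2 * y) y :=
      (hq2.const_add (x ^ 2)).sub_const (2 * h)
    have big := (dA.mul hpoly).add (d1.const_mul (2 * (μ - 1)))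
    have DD := deriv_zero_of_zero big (fun t => by simp only [Pi.add_apply, Pi.mul_apply]; linear_combination P1 x t)
    linear_combination DD
  -- step P1yy
  have P1yy : ∀ x y : ℝ,
      Ayy (x, y) * (x ^ 2 + y ^ 2 - 2 * h) + 4 * y * Ay (x, y) + 2 * A (x, y)
        + 2 * (μ - 1) * F3 (x, y) = 0 := by
    intro x y
    have d2 : HasDerivAt (fun y' => F2 (x, y')) (F3 (x, y)) y := hasDerivAt_y hF2 x y
    have dA : HasDerivAt (fun y' => A (x, y')) (Ay (x, y)) y := hasDerivAt_y hA x y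
    have dAy : HasDerivAt (fun y' => Ay (x, y')) (Ayy (x, y)) y := hasDerivAt_y hAy x y
    have hq2 : HasDerivAt (fun y' : ℝ => y' ^ 2) (2 * y) y := by
      simpa using hasDerivAt_pow 2 y
    have hpoly : HasDerivAt (fun y' : ℝ => x ^ 2 + y' ^ 2 - 2 * h) (2 * y) y :=
      (hq2.const_add (x ^ 2)).sub_const (2 * h)
    have big := ((dAy.mul hpoly).add
      (((hasDerivAt_id y).const_mul 2).mul dA)).add (d2.const_mul (2 * (μ - 1)))
    have DD := deriv_zero_of_zero big (fun t => by simp only [id_eq, Pi.add_apply, Pi.mul_apply]; linear_combination P1y x t)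
    simp only [id_eq] at DD
    linear_combination DD
  -- step P2x
  have P2x : ∀ x y : ℝ,
      μ * (x ^ 2 + y ^ 2 - 2 * h) * Bx (x, y) + 2 * μ * x * F3 (x, y)
        - 2 * (μ - 1) * W (x, y) = 0 := by
    intro x y
    have dF3x : HasDerivAt (fun x' => F3 (x', y)) (Bx (x, y)) x := hasDerivAt_x hF3 x y
    have dF1x : HasDerivAt (fun x' => F1 (x', y)) (W (x, y)) x := hasDerivAt_x hF1 x y
    have hq2x : HasDerivAt (fun x' : ℝ => x' ^ 2) (2 * x) x := by
      simpa using hasDerivAt_pow 2 x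
    have hpolyx : HasDerivAt (fun x' : ℝ => x' ^ 2 + y ^ 2 - 2 * h) (2 * x) x :=
      (hq2x.add_const (y ^ 2)).sub_const (2 * h)
    have big := ((hpolyx.const_mul μ).mul dF3x).sub (dF1x.const_mul (2 * (μ - 1)))
    have DD := deriv_zero_of_zero big (fun t => by simp only [Pi.sub_apply, Pi.mul_apply]; linear_combination S t y)
    linear_combination DD
  -- step P2xx
  have P2xx : ∀ x y : ℝ,
      μ * (x ^ 2 + y ^ 2 - 2 * h) * Bxx (x, y) + 4 * μ * x * Bx (x, y)
        + 2 * μ * F3 (x, y) - 2 * (μ - 1) * A (x, y) = 0 := by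
    intro x y
    have dF3x : HasDerivAt (fun x' => F3 (x', y)) (Bx (x, y)) x := hasDerivAt_x hF3 x y
    have dBxx : HasDerivAt (fun x' => Bx (x', y)) (Bxx (x, y)) x := hasDerivAt_x hBx x y
    have dWx : HasDerivAt (fun x' => W (x', y)) (A (x, y)) x := hasDerivAt_x hW x y
    have hq2x : HasDerivAt (fun x' : ℝ => x' ^ 2) (2 * x) x := by
      simpa using hasDerivAt_pow 2 x
    have hpolyx : HasDerivAt (fun x' : ℝ => x' ^ 2 + y ^ 2 - 2 * h) (2 * x) x :=
      (hq2x.add_const (y ^ 2)).sub_const (2 * h)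
    have big := (((hpolyx.const_mul μ).mul dBxx).add
      (((hasDerivAt_id x).const_mul (2 * μ)).mul dF3x)).sub (dWx.const_mul (2 * (μ - 1)))
    have DD := deriv_zero_of_zero big (fun t => by simp only [id_eq, Pi.add_apply, Pi.sub_apply, Pi.mul_apply]; linear_combination P2x t y)
    simp only [id_eq] at DD
    linear_combination DD
  -- swap : Bxx = Ayy
  have s1 : px (py F1) = py W := by rw [hWdef]; exact swap_pxpy hF1
  have s2 : px (py (py F1)) = py (py W) := by
    rw [swap_pxpy (smooth_py hF1), s1]
  have s4 : px (py (py W)) = py (py (px W)) := by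
    rw [swap_pxpy (smooth_py hW), swap_pxpy hW]
  have swap4 : Bxx = Ayy := by
    rw [hBxxdef, hBxdef, hF3def, hF2def, hAyydef, hAydef, hAdef, s2, s4]
  -- E4 : Ax = -μ Bx
  have E4 : ∀ p : ℝ × ℝ, Ax p = -μ * Bx p := by
    have : Ax = fun p => -μ * Bx p := by
      rw [hAxdef, hAfun, px_const_mul hF3 (-μ), ← hBxdef]
    exact fun p => congrFun this p
  -- Euler equation for A
  have G' : ∀ p : ℝ × ℝ, 2 * p.1 * px A p + 2 * μ * p.2 * py A p + (μ + 1) * A p = 0 := by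
    rintro ⟨x, y⟩
    have e5 : Bxx (x, y) = Ayy (x, y) := congrFun swap4 (x, y)
    have hpx : px A (x, y) = Ax (x, y) := rfl
    have hpy : py A (x, y) = Ay (x, y) := rfl
    rw [hpx, hpy]
    linear_combination (μ / 2) * P1yy x y - (1 / 2) * P2xx x y + (2 - μ) * C1 (x, y)
      + 2 * x * E4 (x, y) + (μ / 2) * (x ^ 2 + y ^ 2 - 2 * h) * e5
  have hA0 : ∀ p : ℝ × ℝ, A p = 0 := euler_vanish μ hμ A hA G'
  -- conclude
  have hF1z : ∀ x y : ℝ, F1 (x, y) = 0 := by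
    intro x y
    have hP := P1 x y
    rw [hA0 (x, y), zero_mul] at hP
    have hne : (-2 : ℝ) * (μ - 1) ≠ 0 := by
      intro hc
      have : μ - 1 ≠ 0 := by intro hc2; linarith
      exact this (by linarith [mul_eq_zero.mp hc])
    rcases mul_eq_zero.mp hP.symm with hc | hc
    · exact absurd hc hne
    · exact hc
  have hF1fun : F1 = fun _ => (0 : ℝ) := funext fun p => hF1z p.1 p.2
  have hF2z : ∀ p : ℝ × ℝ, F2 p = 0 := by
    intro p
    rw [hF2def, hF1fun]
    simp [py]
  intro x y
  have hH := H x y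
  rw [hF2z (x, y), hF1z x y] at hH
  show F (x, y) = 0
  linarith

end KillingAux

/-- **Vanishing of the first Killing-field component.**  Let `μ > 1`, `h < 0`.
If `ξ : ℝ² → ℝ` is real-analytic and satisfies the consistency equation
`∂ₓₓξ = −μ·∂ᵧᵧξ` together with
`2μ(x² + y² − 2h)·∂ᵧᵧξ − 4μy·∂ᵧξ + 4ξ = 0` on all of `ℝ²`, then `ξ ≡ 0`. -/
theorem first_killing_component_vanishes
    (μ h : ℝ) (hμ : 1 < μ) (hh : h < 0)
    (ξ : ℝ → ℝ → ℝ)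
    (hξ : ∀ p : ℝ × ℝ, AnalyticAt ℝ (fun q : ℝ × ℝ => ξ q.1 q.2) p)
    (hconsistency : ∀ x y : ℝ, pdx (pdx ξ) x y = -μ * pdy (pdy ξ) x y)
    (heq : ∀ x y : ℝ,
      2 * μ * (x ^ 2 + y ^ 2 - 2 * h) * pdy (pdy ξ) x y
        - 4 * μ * y * pdy ξ x y + 4 * ξ x y = 0) :
    ∀ x y : ℝ, ξ x y = 0 := by
  simp only [pdx, pdy] at hconsistency heq
  exact first_killing_aux μ h hμ hh ξ hξ hconsistency heq
end

section
/- Let μ > 1 and h < 0. Suppose ξ : ℝ² → ℝ is real-analytic and satisfies, for all (x,y) ∈ ℝ², both the consistency equation ∂²ξ/∂y²(x,y) = −(1/μ)·∂²ξ/∂x²(x,y) and the second-order equation (2/μ)(x² + y² − 2h)·∂²ξ/∂x²(x,y) − (4/μ)x·∂ξ/∂x(x,y) + 4ξ(x,y) = 0. Then ξ is identically zero on ℝ². -/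
namespace KillingAux

def Ana (f : ℝ → ℝ → ℝ) : Prop := ∀ p : ℝ × ℝ, AnalyticAt ℝ (fun q : ℝ × ℝ => f q.1 q.2) p

noncomputable def unc (f : ℝ → ℝ → ℝ) : ℝ × ℝ → ℝ := fun q => f q.1 q.2

lemma hasDerivAt_slice1 {f : ℝ → ℝ → ℝ} (hf : Ana f) (x y : ℝ) :
    HasDerivAt (fun x' => f x' y) (fderiv ℝ (unc f) (x, y) (1, 0)) x := by
  have h := (hf (x, y)).differentiableAt.hasFDerivAt
  have hline : HasDerivAt (fun x' : ℝ => ((x', y) : ℝ × ℝ)) ((1:ℝ), (0:ℝ)) x :=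
    (hasDerivAt_id x).prodMk (hasDerivAt_const x y)
  exact h.comp_hasDerivAt x hline

lemma hasDerivAt_slice2 {f : ℝ → ℝ → ℝ} (hf : Ana f) (x y : ℝ) :
    HasDerivAt (fun y' => f x y') (fderiv ℝ (unc f) (x, y) (0, 1)) y := by
  have h := (hf (x, y)).differentiableAt.hasFDerivAt
  have hline : HasDerivAt (fun y' : ℝ => ((x, y') : ℝ × ℝ)) ((0:ℝ), (1:ℝ)) y :=
    (hasDerivAt_const y x).prodMk (hasDerivAt_id y)
  exact h.comp_hasDerivAt y hline

lemma pdx_eq {f : ℝ → ℝ → ℝ} (hf : Ana f) (x y : ℝ) :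
    pdx f x y = fderiv ℝ (unc f) (x, y) (1, 0) :=
  (hasDerivAt_slice1 hf x y).deriv

lemma pdy_eq {f : ℝ → ℝ → ℝ} (hf : Ana f) (x y : ℝ) :
    pdy f x y = fderiv ℝ (unc f) (x, y) (0, 1) :=
  (hasDerivAt_slice2 hf x y).deriv

lemma hasDerivAt_pdx {f : ℝ → ℝ → ℝ} (hf : Ana f) (x y : ℝ) :
    HasDerivAt (fun x' => f x' y) (pdx f x y) x := by
  rw [pdx_eq hf]; exact hasDerivAt_slice1 hf x y

lemma hasDerivAt_pdy {f : ℝ → ℝ → ℝ} (hf : Ana f) (x y : ℝ) :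
    HasDerivAt (fun y' => f x y') (pdy f x y) y := by
  rw [pdy_eq hf]; exact hasDerivAt_slice2 hf x y

lemma ana_fderiv_apply {f : ℝ → ℝ → ℝ} (hf : Ana f) (v : ℝ × ℝ) (p : ℝ × ℝ) :
    AnalyticAt ℝ (fun q => fderiv ℝ (unc f) q v) p :=
  ((ContinuousLinearMap.apply ℝ ℝ v).analyticAt _).comp (hf p).fderiv

lemma ana_pdx {f : ℝ → ℝ → ℝ} (hf : Ana f) : Ana (pdx f) := by
  intro p
  have h1 : (fun q : ℝ × ℝ => pdx f q.1 q.2) = fun q => fderiv ℝ (unc f) q (1, 0) := by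
    funext q; exact pdx_eq hf q.1 q.2
  rw [show (fun q : ℝ × ℝ => pdx f q.1 q.2) = fun q => fderiv ℝ (unc f) q (1, 0) from h1]
  exact ana_fderiv_apply hf _ p

lemma ana_pdy {f : ℝ → ℝ → ℝ} (hf : Ana f) : Ana (pdy f) := by
  intro p
  have h1 : (fun q : ℝ × ℝ => pdy f q.1 q.2) = fun q => fderiv ℝ (unc f) q (0, 1) := by
    funext q; exact pdy_eq hf q.1 q.2
  rw [show (fun q : ℝ × ℝ => pdy f q.1 q.2) = fun q => fderiv ℝ (unc f) q (0, 1) from h1]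
  exact ana_fderiv_apply hf _ p

lemma pd_swap {f : ℝ → ℝ → ℝ} (hf : Ana f) (x y : ℝ) :
    pdx (pdy f) x y = pdy (pdx f) x y := by
  have hF : ∀ p : ℝ × ℝ, HasFDerivAt (unc f) (fderiv ℝ (unc f) p) p :=
    fun p => ((hf p).differentiableAt).hasFDerivAt
  have hF' : HasFDerivAt (fderiv ℝ (unc f)) (fderiv ℝ (fderiv ℝ (unc f)) (x, y)) (x, y) :=
    ((hf (x, y)).fderiv.differentiableAt).hasFDerivAt
  have hsymm := second_derivative_symmetric hF hF' ((1:ℝ), (0:ℝ)) ((0:ℝ), (1:ℝ))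
  have h1 : pdx (pdy f) x y = fderiv ℝ (fun q => fderiv ℝ (unc f) q (0, 1)) (x, y) (1, 0) := by
    rw [pdx_eq (ana_pdy hf)]
    congr 1
    apply Filter.EventuallyEq.fderiv_eq
    filter_upwards with q
    exact pdy_eq hf q.1 q.2
  have h2 : pdy (pdx f) x y = fderiv ℝ (fun q => fderiv ℝ (unc f) q (1, 0)) (x, y) (0, 1) := by
    rw [pdy_eq (ana_pdx hf)]
    congr 1
    apply Filter.EventuallyEq.fderiv_eq
    filter_upwards with q
    exact pdx_eq hf q.1 q.2
  have hc1 : fderiv ℝ (fun q => fderiv ℝ (unc f) q (0, 1)) (x, y)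
      = (ContinuousLinearMap.apply ℝ ℝ ((0:ℝ),(1:ℝ))).comp (fderiv ℝ (fderiv ℝ (unc f)) (x, y)) := by
    apply HasFDerivAt.fderiv
    exact (ContinuousLinearMap.apply ℝ ℝ ((0:ℝ),(1:ℝ))).hasFDerivAt.comp _ hF'
  have hc2 : fderiv ℝ (fun q => fderiv ℝ (unc f) q (1, 0)) (x, y)
      = (ContinuousLinearMap.apply ℝ ℝ ((1:ℝ),(0:ℝ))).comp (fderiv ℝ (fderiv ℝ (unc f)) (x, y)) := by
    apply HasFDerivAt.fderiv
    exact (ContinuousLinearMap.apply ℝ ℝ ((1:ℝ),(0:ℝ))).hasFDerivAt.comp _ hF'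
  rw [h1, h2, hc1, hc2]
  simpa using hsymm

lemma pdx_congr {f g : ℝ → ℝ → ℝ} (hfg : ∀ a b, f a b = g a b) (x y : ℝ) :
    pdx f x y = pdx g x y := by
  unfold pdx
  congr 1
  exact funext fun a => hfg a y

lemma pdy_congr {f g : ℝ → ℝ → ℝ} (hfg : ∀ a b, f a b = g a b) (x y : ℝ) :
    pdy f x y = pdy g x y := by
  unfold pdy
  congr 1
  exact funext fun b => hfg x b

end KillingAux

set_option maxHeartbeats 2000000 in
open KillingAux in
/-- **Vanishing of the second Killing-field component.**  Let `μ > 1`, `h < 0`.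
If `ξ : ℝ² → ℝ` is real-analytic and satisfies the consistency equation
`∂ᵧᵧξ = −(1/μ)·∂ₓₓξ` together with
`(2/μ)(x² + y² − 2h)·∂ₓₓξ − (4/μ)x·∂ₓξ + 4ξ = 0` on all of `ℝ²`, then `ξ ≡ 0`. -/
theorem second_killing_component_vanishes
    (μ h : ℝ) (hμ : 1 < μ) (hh : h < 0)
    (ξ : ℝ → ℝ → ℝ)
    (hξ : ∀ p : ℝ × ℝ, AnalyticAt ℝ (fun q : ℝ × ℝ => ξ q.1 q.2) p)
    (hconsistency : ∀ x y : ℝ, pdy (pdy ξ) x y = -(1 / μ) * pdx (pdx ξ) x y)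
    (heq : ∀ x y : ℝ,
      (2 / μ) * (x ^ 2 + y ^ 2 - 2 * h) * pdx (pdx ξ) x y
        - (4 / μ) * x * pdx ξ x y + 4 * ξ x y = 0) :
    ∀ x y : ℝ, ξ x y = 0 := by
  have hμ0 : (0:ℝ) < μ := lt_trans one_pos hμ
  have hμne : μ ≠ 0 := ne_of_gt hμ0
  have hRpos : ∀ x y : ℝ, (0:ℝ) < x ^ 2 + y ^ 2 - 2 * h := by
    intro x y; nlinarith [sq_nonneg x, sq_nonneg y]
  have A : Ana ξ := hξ
  have Ax : Ana (pdx ξ) := ana_pdx A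
  have Axx : Ana (pdx (pdx ξ)) := ana_pdx Ax
  have Axxx : Ana (pdx (pdx (pdx ξ))) := ana_pdx Axx
  have Ay : Ana (pdy ξ) := ana_pdy A
  have Ayx : Ana (pdy (pdx ξ)) := ana_pdy Ax
  have Ayxx : Ana (pdy (pdx (pdx ξ))) := ana_pdy Axx
  have Ayy : Ana (pdy (pdy ξ)) := ana_pdy Ay
  -- polynomial (denominator-free) forms of the hypotheses
  have heqP : ∀ x y : ℝ, 2 * (x ^ 2 + y ^ 2 - 2 * h) * pdx (pdx ξ) x y
      - 4 * x * pdx ξ x y + 4 * μ * ξ x y = 0 := by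
    intro x y
    have hth := heq x y
    field_simp at hth
    linear_combination hth
  have hconsP : ∀ x y : ℝ, μ * pdy (pdy ξ) x y = - pdx (pdx ξ) x y := by
    intro x y
    have hth := hconsistency x y
    field_simp at hth
    linear_combination hth
  -- x-derivative of heqP :  R * ξxxx = (2-2μ) ξx
  have S1 : ∀ x y : ℝ, (x ^ 2 + y ^ 2 - 2 * h) * pdx (pdx (pdx ξ)) x y
      = (2 - 2 * μ) * pdx ξ x y := by
    intro x y
    have hpoly : HasDerivAt (fun x' : ℝ => x' ^ 2 + y ^ 2 - 2 * h) (2 * x) x := by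
      simpa using ((hasDerivAt_pow 2 x).add_const (y ^ 2)).sub_const (2 * h)
    have hD : HasDerivAt
        (fun x' => 2 * (x' ^ 2 + y ^ 2 - 2 * h) * pdx (pdx ξ) x' y
          - 4 * x' * pdx ξ x' y + 4 * μ * ξ x' y)
        (2 * (2 * x) * pdx (pdx ξ) x y
          + 2 * (x ^ 2 + y ^ 2 - 2 * h) * pdx (pdx (pdx ξ)) x y
          - (4 * 1 * pdx ξ x y + 4 * x * pdx (pdx ξ) x y)
          + 4 * μ * pdx ξ x y) x :=
      (((hpoly.const_mul 2).mul (hasDerivAt_pdx Axx x y)).sub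
        (((hasDerivAt_id x).const_mul 4).mul (hasDerivAt_pdx Ax x y))).add
        ((hasDerivAt_pdx A x y).const_mul (4 * μ))
    have hz : HasDerivAt
        (fun x' => 2 * (x' ^ 2 + y ^ 2 - 2 * h) * pdx (pdx ξ) x' y
          - 4 * x' * pdx ξ x' y + 4 * μ * ξ x' y) 0 x := by
      have hfun : (fun x' => 2 * (x' ^ 2 + y ^ 2 - 2 * h) * pdx (pdx ξ) x' y
          - 4 * x' * pdx ξ x' y + 4 * μ * ξ x' y) = fun _ => (0:ℝ) :=
        funext fun x' => heqP x' y
      rw [hfun]; exact hasDerivAt_const x 0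
    have h0 := hD.unique hz
    linear_combination h0 / 2
  -- x-derivative of S1 :  2x ξxxx + R ξxxxx = (2-2μ) ξxx
  have S1b : ∀ x y : ℝ, 2 * x * pdx (pdx (pdx ξ)) x y
      + (x ^ 2 + y ^ 2 - 2 * h) * pdx (pdx (pdx (pdx ξ))) x y
      = (2 - 2 * μ) * pdx (pdx ξ) x y := by
    intro x y
    have hpoly : HasDerivAt (fun x' : ℝ => x' ^ 2 + y ^ 2 - 2 * h) (2 * x) x := by
      simpa using ((hasDerivAt_pow 2 x).add_const (y ^ 2)).sub_const (2 * h)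
    have hf : HasDerivAt (fun x' => (x' ^ 2 + y ^ 2 - 2 * h) * pdx (pdx (pdx ξ)) x' y)
        (2 * x * pdx (pdx (pdx ξ)) x y
          + (x ^ 2 + y ^ 2 - 2 * h) * pdx (pdx (pdx (pdx ξ))) x y) x :=
      hpoly.mul (hasDerivAt_pdx Axxx x y)
    have hg : HasDerivAt (fun x' => (x' ^ 2 + y ^ 2 - 2 * h) * pdx (pdx (pdx ξ)) x' y)
        ((2 - 2 * μ) * pdx (pdx ξ) x y) x := by
      have hfun : (fun x' => (x' ^ 2 + y ^ 2 - 2 * h) * pdx (pdx (pdx ξ)) x' y)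
          = fun x' => (2 - 2 * μ) * pdx ξ x' y := funext fun x' => S1 x' y
      rw [hfun]; exact (hasDerivAt_pdx Ax x y).const_mul (2 - 2 * μ)
    exact hf.unique hg
  -- x-derivatives of the consistency equation
  have hxyyP : ∀ x y : ℝ, μ * pdx (pdy (pdy ξ)) x y = - pdx (pdx (pdx ξ)) x y := by
    intro x y
    have hf : HasDerivAt (fun x' => μ * pdy (pdy ξ) x' y) (μ * pdx (pdy (pdy ξ)) x y) x :=
      (hasDerivAt_pdx Ayy x y).const_mul μ
    have hg : HasDerivAt (fun x' => μ * pdy (pdy ξ) x' y) (- pdx (pdx (pdx ξ)) x y) x := by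
      have hfun : (fun x' => μ * pdy (pdy ξ) x' y) = fun x' => - pdx (pdx ξ) x' y :=
        funext fun x' => hconsP x' y
      rw [hfun]; exact (hasDerivAt_pdx Axx x y).neg
    exact hf.unique hg
  have hxxyyP : ∀ x y : ℝ, μ * pdx (pdx (pdy (pdy ξ))) x y
      = - pdx (pdx (pdx (pdx ξ))) x y := by
    intro x y
    have hf : HasDerivAt (fun x' => μ * pdx (pdy (pdy ξ)) x' y)
        (μ * pdx (pdx (pdy (pdy ξ))) x y) x :=
      (hasDerivAt_pdx (ana_pdx Ayy) x y).const_mul μ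
    have hg : HasDerivAt (fun x' => μ * pdx (pdy (pdy ξ)) x' y)
        (- pdx (pdx (pdx (pdx ξ))) x y) x := by
      have hfun : (fun x' => μ * pdx (pdy (pdy ξ)) x' y)
          = fun x' => - pdx (pdx (pdx ξ)) x' y := funext fun x' => hxyyP x' y
      rw [hfun]; exact (hasDerivAt_pdx Axxx x y).neg
    exact hf.unique hg
  -- mixed-partial swaps
  have s2 : ∀ a b : ℝ, pdy (pdx (pdx ξ)) a b = pdx (pdx (pdy ξ)) a b := by
    intro a b
    rw [← pd_swap Ax a b]
    exact pdx_congr (fun a' b' => (pd_swap A a' b').symm) a b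
  have s3 : ∀ a b : ℝ, pdy (pdy (pdx (pdx ξ))) a b = pdx (pdx (pdy (pdy ξ))) a b := by
    intro a b
    have h1 : pdy (pdy (pdx (pdx ξ))) a b = pdy (pdx (pdx (pdy ξ))) a b := pdy_congr s2 a b
    have h2 : pdy (pdx (pdx (pdy ξ))) a b = pdx (pdy (pdx (pdy ξ))) a b :=
      (pd_swap (ana_pdx Ay) a b).symm
    have h3 : pdx (pdy (pdx (pdy ξ))) a b = pdx (pdx (pdy (pdy ξ))) a b :=
      pdx_congr (fun a' b' => (pd_swap Ay a' b').symm) a b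
    rw [h1, h2, h3]
  have s4 : ∀ a b : ℝ, pdy (pdy (pdx ξ)) a b = pdx (pdy (pdy ξ)) a b := by
    intro a b
    have h1 : pdy (pdy (pdx ξ)) a b = pdy (pdx (pdy ξ)) a b :=
      pdy_congr (fun a' b' => (pd_swap A a' b').symm) a b
    exact h1.trans (pd_swap Ay a b).symm
  -- μ R ∂yy(ξx) = 2(μ-1) ξx
  have S2' : ∀ x y : ℝ, μ * (x ^ 2 + y ^ 2 - 2 * h) * pdy (pdy (pdx ξ)) x y
      = 2 * (μ - 1) * pdx ξ x y := by
    intro x y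
    rw [s4 x y]
    linear_combination (x ^ 2 + y ^ 2 - 2 * h) * hxyyP x y - S1 x y
  -- y-derivative of heqP
  have hE1 : ∀ x y : ℝ, 2 * (2 * y) * pdx (pdx ξ) x y
      + 2 * (x ^ 2 + y ^ 2 - 2 * h) * pdy (pdx (pdx ξ)) x y
      - 4 * x * pdy (pdx ξ) x y + 4 * μ * pdy ξ x y = 0 := by
    intro x y
    have hpolyY : HasDerivAt (fun y' : ℝ => x ^ 2 + y' ^ 2 - 2 * h) (2 * y) y := by
      simpa using ((hasDerivAt_pow 2 y).const_add (x ^ 2)).sub_const (2 * h)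
    have hD : HasDerivAt
        (fun y' => 2 * (x ^ 2 + y' ^ 2 - 2 * h) * pdx (pdx ξ) x y'
          - 4 * x * pdx ξ x y' + 4 * μ * ξ x y')
        (2 * (2 * y) * pdx (pdx ξ) x y
          + 2 * (x ^ 2 + y ^ 2 - 2 * h) * pdy (pdx (pdx ξ)) x y
          - 4 * x * pdy (pdx ξ) x y + 4 * μ * pdy ξ x y) y :=
      (((hpolyY.const_mul 2).mul (hasDerivAt_pdy Axx x y)).sub
        ((hasDerivAt_pdy Ax x y).const_mul (4 * x))).add
        ((hasDerivAt_pdy A x y).const_mul (4 * μ))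
    have hz : HasDerivAt
        (fun y' => 2 * (x ^ 2 + y' ^ 2 - 2 * h) * pdx (pdx ξ) x y'
          - 4 * x * pdx ξ x y' + 4 * μ * ξ x y') 0 y := by
      have hfun : (fun y' => 2 * (x ^ 2 + y' ^ 2 - 2 * h) * pdx (pdx ξ) x y'
          - 4 * x * pdx ξ x y' + 4 * μ * ξ x y') = fun _ => (0:ℝ) :=
        funext fun y' => heqP x y'
      rw [hfun]; exact hasDerivAt_const y 0
    exact hD.unique hz
  -- y-derivative of hE1
  have hE2 : ∀ x y : ℝ,
      (2 * (2 * 1) * pdx (pdx ξ) x y + 2 * (2 * y) * pdy (pdx (pdx ξ)) x y)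
      + (2 * (2 * y) * pdy (pdx (pdx ξ)) x y
          + 2 * (x ^ 2 + y ^ 2 - 2 * h) * pdy (pdy (pdx (pdx ξ))) x y)
      - 4 * x * pdy (pdy (pdx ξ)) x y + 4 * μ * pdy (pdy ξ) x y = 0 := by
    intro x y
    have hpolyY : HasDerivAt (fun y' : ℝ => x ^ 2 + y' ^ 2 - 2 * h) (2 * y) y := by
      simpa using ((hasDerivAt_pow 2 y).const_add (x ^ 2)).sub_const (2 * h)
    have hc1 : HasDerivAt (fun y' : ℝ => 2 * (2 * y')) (2 * (2 * 1)) y :=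
      ((hasDerivAt_id y).const_mul 2).const_mul 2
    have hD : HasDerivAt
        (fun y' => 2 * (2 * y') * pdx (pdx ξ) x y'
          + 2 * (x ^ 2 + y' ^ 2 - 2 * h) * pdy (pdx (pdx ξ)) x y'
          - 4 * x * pdy (pdx ξ) x y' + 4 * μ * pdy ξ x y')
        ((2 * (2 * 1) * pdx (pdx ξ) x y + 2 * (2 * y) * pdy (pdx (pdx ξ)) x y)
          + (2 * (2 * y) * pdy (pdx (pdx ξ)) x y
              + 2 * (x ^ 2 + y ^ 2 - 2 * h) * pdy (pdy (pdx (pdx ξ))) x y)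
          - 4 * x * pdy (pdy (pdx ξ)) x y + 4 * μ * pdy (pdy ξ) x y) y :=
      ((((hc1.mul (hasDerivAt_pdy Axx x y)).add
        ((hpolyY.const_mul 2).mul (hasDerivAt_pdy Ayxx x y))).sub
        ((hasDerivAt_pdy Ayx x y).const_mul (4 * x))).add
        ((hasDerivAt_pdy Ay x y).const_mul (4 * μ)))
    have hz : HasDerivAt
        (fun y' => 2 * (2 * y') * pdx (pdx ξ) x y'
          + 2 * (x ^ 2 + y' ^ 2 - 2 * h) * pdy (pdx (pdx ξ)) x y'
          - 4 * x * pdy (pdx ξ) x y' + 4 * μ * pdy ξ x y') 0 y := by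
      have hfun : (fun y' => 2 * (2 * y') * pdx (pdx ξ) x y'
          + 2 * (x ^ 2 + y' ^ 2 - 2 * h) * pdy (pdx (pdx ξ)) x y'
          - 4 * x * pdy (pdx ξ) x y' + 4 * μ * pdy ξ x y') = fun _ => (0:ℝ) :=
        funext fun y' => hE1 x y'
      rw [hfun]; exact hasDerivAt_const y 0
    exact hD.unique hz
  have hq1 : ∀ x y : ℝ, μ * pdy (pdy (pdx (pdx ξ))) x y
      = - pdx (pdx (pdx (pdx ξ))) x y := by
    intro x y; rw [s3 x y]; exact hxxyyP x y
  -- the key first-order relation (times R)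
  have hYR : ∀ x y : ℝ, (x ^ 2 + y ^ 2 - 2 * h)
      * (4 * μ * y * pdy (pdx (pdx ξ)) x y + 2 * (μ - 1) * pdx (pdx ξ) x y
          + 4 * x * pdx (pdx (pdx ξ)) x y) = 0 := by
    intro x y
    linear_combination (μ * (x ^ 2 + y ^ 2 - 2 * h) / 2) * hE2 x y
      - (x ^ 2 + y ^ 2 - 2 * h) ^ 2 * hq1 x y
      + 2 * x * S2' x y
      - 2 * μ * (x ^ 2 + y ^ 2 - 2 * h) * hconsP x y
      + (x ^ 2 + y ^ 2 - 2 * h) * S1b x y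
      + 2 * x * S1 x y
  have hY : ∀ x y : ℝ, 4 * μ * y * pdy (pdx (pdx ξ)) x y
      + 2 * (μ - 1) * pdx (pdx ξ) x y + 4 * x * pdx (pdx (pdx ξ)) x y = 0 := by
    intro x y
    rcases mul_eq_zero.mp (hYR x y) with hc | hc
    · exact absurd hc (hRpos x y).ne'
    · exact hc
  -- restriction to the x-axis : ξx(x,0) = 0
  have Y0 : ∀ x : ℝ, 2 * (μ - 1) * pdx (pdx ξ) x 0 + 4 * x * pdx (pdx (pdx ξ)) x 0 = 0 := by
    intro x; linear_combination hY x 0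
  have hU1 : ∀ x : ℝ, (x ^ 2 - 2 * h) * pdx (pdx ξ) x 0 = 4 * x * pdx ξ x 0 := by
    intro x
    have h' : (2 * (μ - 1)) * ((x ^ 2 - 2 * h) * pdx (pdx ξ) x 0)
        = (2 * (μ - 1)) * (4 * x * pdx ξ x 0) := by
      linear_combination (x ^ 2 - 2 * h) * Y0 x - 4 * x * S1 x 0
    exact mul_left_cancel₀ (show (2 * (μ - 1) : ℝ) ≠ 0 by nlinarith) h'
  have hU2 : ∀ x : ℝ, 2 * x * pdx (pdx ξ) x 0 + (x ^ 2 - 2 * h) * pdx (pdx (pdx ξ)) x 0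
      = 4 * 1 * pdx ξ x 0 + 4 * x * pdx (pdx ξ) x 0 := by
    intro x
    have hpoly0 : HasDerivAt (fun x' : ℝ => x' ^ 2 - 2 * h) (2 * x) x := by
      simpa using (hasDerivAt_pow 2 x).sub_const (2 * h)
    have hf : HasDerivAt (fun x' => (x' ^ 2 - 2 * h) * pdx (pdx ξ) x' 0)
        (2 * x * pdx (pdx ξ) x 0 + (x ^ 2 - 2 * h) * pdx (pdx (pdx ξ)) x 0) x :=
      hpoly0.mul (hasDerivAt_pdx Axx x 0)
    have hg : HasDerivAt (fun x' => (x' ^ 2 - 2 * h) * pdx (pdx ξ) x' 0)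
        (4 * 1 * pdx ξ x 0 + 4 * x * pdx (pdx ξ) x 0) x := by
      have hfun : (fun x' => (x' ^ 2 - 2 * h) * pdx (pdx ξ) x' 0)
          = fun x' => 4 * x' * pdx ξ x' 0 := funext fun x' => hU1 x'
      rw [hfun]
      exact ((hasDerivAt_id x).const_mul 4).mul (hasDerivAt_pdx Ax x 0)
    exact hf.unique hg
  have hu0 : ∀ x : ℝ, pdx ξ x 0 = 0 := by
    intro x
    have key : pdx ξ x 0 * (8 * x ^ 2 + (2 * (μ - 1) + 4) * (x ^ 2 - 2 * h)) = 0 := by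
      linear_combination (-(x ^ 2 - 2 * h)) * hU2 x - 2 * x * hU1 x
        + (x ^ 2 - 2 * h) * S1 x 0
    rcases mul_eq_zero.mp key with hc | hc
    · exact hc
    · exfalso
      have hpos : (0:ℝ) < 8 * x ^ 2 + (2 * (μ - 1) + 4) * (x ^ 2 - 2 * h) := by
        nlinarith [mul_pos (show (0:ℝ) < 2 * (μ - 1) + 4 by linarith) (hRpos x 0), sq_nonneg x]
      linarith
  have hB0 : ∀ x : ℝ, pdx (pdx ξ) x 0 = 0 := by
    intro x
    have h2 : (x ^ 2 - 2 * h) * pdx (pdx ξ) x 0 = 0 := by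
      rw [hU1 x, hu0 x]; ring
    rcases mul_eq_zero.mp h2 with hc | hc
    · exfalso; have := hRpos x 0; nlinarith
    · exact hc
  -- y-derivative of hY
  have hY' : ∀ x y : ℝ, 4 * μ * 1 * pdy (pdx (pdx ξ)) x y
      + 4 * μ * y * pdy (pdy (pdx (pdx ξ))) x y
      + 2 * (μ - 1) * pdy (pdx (pdx ξ)) x y
      + 4 * x * pdy (pdx (pdx (pdx ξ))) x y = 0 := by
    intro x y
    have hD : HasDerivAt
        (fun y' => 4 * μ * y' * pdy (pdx (pdx ξ)) x y'
          + 2 * (μ - 1) * pdx (pdx ξ) x y' + 4 * x * pdx (pdx (pdx ξ)) x y')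
        (4 * μ * 1 * pdy (pdx (pdx ξ)) x y
          + 4 * μ * y * pdy (pdy (pdx (pdx ξ))) x y
          + 2 * (μ - 1) * pdy (pdx (pdx ξ)) x y
          + 4 * x * pdy (pdx (pdx (pdx ξ))) x y) y :=
      ((((hasDerivAt_id y).const_mul (4 * μ)).mul (hasDerivAt_pdy Ayxx x y)).add
        ((hasDerivAt_pdy Axx x y).const_mul (2 * (μ - 1)))).add
        ((hasDerivAt_pdy Axxx x y).const_mul (4 * x))
    have hz : HasDerivAt
        (fun y' => 4 * μ * y' * pdy (pdx (pdx ξ)) x y'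
          + 2 * (μ - 1) * pdx (pdx ξ) x y' + 4 * x * pdx (pdx (pdx ξ)) x y') 0 y := by
      have hfun : (fun y' => 4 * μ * y' * pdy (pdx (pdx ξ)) x y'
          + 2 * (μ - 1) * pdx (pdx ξ) x y' + 4 * x * pdx (pdx (pdx ξ)) x y')
          = fun _ => (0:ℝ) := funext fun y' => hY x y'
      rw [hfun]; exact hasDerivAt_const y 0
    exact hD.unique hz
  have V1 : ∀ x : ℝ, (4 * μ + 2 * (μ - 1)) * pdy (pdx (pdx ξ)) x 0
      + 4 * x * pdy (pdx (pdx (pdx ξ))) x 0 = 0 := by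
    intro x; linear_combination hY' x 0
  -- y-derivative of S1
  have V2 : ∀ x y : ℝ, 2 * y * pdx (pdx (pdx ξ)) x y
      + (x ^ 2 + y ^ 2 - 2 * h) * pdy (pdx (pdx (pdx ξ))) x y
      = (2 - 2 * μ) * pdy (pdx ξ) x y := by
    intro x y
    have hpolyY : HasDerivAt (fun y' : ℝ => x ^ 2 + y' ^ 2 - 2 * h) (2 * y) y := by
      simpa using ((hasDerivAt_pow 2 y).const_add (x ^ 2)).sub_const (2 * h)
    have hf : HasDerivAt (fun y' => (x ^ 2 + y' ^ 2 - 2 * h) * pdx (pdx (pdx ξ)) x y')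
        (2 * y * pdx (pdx (pdx ξ)) x y
          + (x ^ 2 + y ^ 2 - 2 * h) * pdy (pdx (pdx (pdx ξ))) x y) y :=
      hpolyY.mul (hasDerivAt_pdy Axxx x y)
    have hg : HasDerivAt (fun y' => (x ^ 2 + y' ^ 2 - 2 * h) * pdx (pdx (pdx ξ)) x y')
        ((2 - 2 * μ) * pdy (pdx ξ) x y) y := by
      have hfun : (fun y' => (x ^ 2 + y' ^ 2 - 2 * h) * pdx (pdx (pdx ξ)) x y')
          = fun y' => (2 - 2 * μ) * pdx ξ x y' := funext fun y' => S1 x y'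
      rw [hfun]; exact (hasDerivAt_pdy Ax x y).const_mul (2 - 2 * μ)
    exact hf.unique hg
  have V3 : ∀ x : ℝ, (4 * μ + 2 * (μ - 1)) * ((x ^ 2 - 2 * h) * pdy (pdx (pdx ξ)) x 0)
      = 4 * (2 * (μ - 1)) * x * pdy (pdx ξ) x 0 := by
    intro x
    linear_combination (x ^ 2 - 2 * h) * V1 x - 4 * x * V2 x 0
  -- x-derivative of V3
  have V5 : ∀ x : ℝ, (4 * μ + 2 * (μ - 1)) * (2 * x * pdy (pdx (pdx ξ)) x 0
        + (x ^ 2 - 2 * h) * pdx (pdy (pdx (pdx ξ))) x 0)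
      = 4 * (2 * (μ - 1)) * 1 * pdy (pdx ξ) x 0
        + 4 * (2 * (μ - 1)) * x * pdx (pdy (pdx ξ)) x 0 := by
    intro x
    have hpoly0 : HasDerivAt (fun x' : ℝ => x' ^ 2 - 2 * h) (2 * x) x := by
      simpa using (hasDerivAt_pow 2 x).sub_const (2 * h)
    have hf : HasDerivAt
        (fun x' => (4 * μ + 2 * (μ - 1)) * ((x' ^ 2 - 2 * h) * pdy (pdx (pdx ξ)) x' 0))
        ((4 * μ + 2 * (μ - 1)) * (2 * x * pdy (pdx (pdx ξ)) x 0
          + (x ^ 2 - 2 * h) * pdx (pdy (pdx (pdx ξ))) x 0)) x :=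
      (hpoly0.mul (hasDerivAt_pdx Ayxx x 0)).const_mul (4 * μ + 2 * (μ - 1))
    have hg : HasDerivAt
        (fun x' => (4 * μ + 2 * (μ - 1)) * ((x' ^ 2 - 2 * h) * pdy (pdx (pdx ξ)) x' 0))
        (4 * (2 * (μ - 1)) * 1 * pdy (pdx ξ) x 0
          + 4 * (2 * (μ - 1)) * x * pdx (pdy (pdx ξ)) x 0) x := by
      have hfun : (fun x' => (4 * μ + 2 * (μ - 1)) * ((x' ^ 2 - 2 * h) * pdy (pdx (pdx ξ)) x' 0))
          = fun x' => 4 * (2 * (μ - 1)) * x' * pdy (pdx ξ) x' 0 := funext fun x' => V3 x'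
      rw [hfun]
      exact ((hasDerivAt_id x).const_mul (4 * (2 * (μ - 1)))).mul (hasDerivAt_pdx Ayx x 0)
    exact hf.unique hg
  have hv0 : ∀ x : ℝ, pdy (pdx ξ) x 0 = 0 := by
    intro x
    have V5' := V5 x
    rw [pd_swap Axx x 0, pd_swap Ax x 0] at V5'
    have key : pdy (pdx ξ) x 0 * (8 * (2 * (μ - 1)) * (4 * μ + 2 * (μ - 1)) * x ^ 2
        - 16 * (2 * (μ - 1)) ^ 2 * x ^ 2
        - 4 * (2 * (μ - 1)) * (4 * μ + 2 * (μ - 1)) * (x ^ 2 - 2 * h)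
        - (2 * (μ - 1)) * (4 * μ + 2 * (μ - 1)) ^ 2 * (x ^ 2 - 2 * h)) = 0 := by
      linear_combination (4 * (2 * (μ - 1)) * x - 2 * (4 * μ + 2 * (μ - 1)) * x) * V3 x
        - (4 * μ + 2 * (μ - 1)) ^ 2 * (x ^ 2 - 2 * h) * V2 x 0
        + (4 * μ + 2 * (μ - 1)) * (x ^ 2 - 2 * h) * V5'
    rcases mul_eq_zero.mp key with hc | hc
    · exact hc
    · exfalso
      have h36 : (0:ℝ) ≤ 36 * μ ^ 2 - 16 * μ - 20 := by nlinarith [sq_nonneg (μ - 1)]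
      have h1 : (0:ℝ) < (36 * μ ^ 2 - 4) * (x ^ 2 - 2 * h) - (16 * μ + 16) * x ^ 2 := by
        nlinarith [mul_nonneg h36 (sq_nonneg x),
          mul_pos (show (0:ℝ) < 36 * μ ^ 2 - 4 by nlinarith) (show (0:ℝ) < -(2 * h) by linarith)]
      nlinarith [mul_pos (show (0:ℝ) < 2 * (μ - 1) by linarith) h1]
  -- energy argument in the y-direction : ξx ≡ 0
  have hWzero : ∀ x y : ℝ, pdx ξ x y = 0 := by
    intro x y0
    have hP0 : (0:ℝ) < μ * (-(2 * h)) := mul_pos hμ0 (by linarith)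
    set L : ℝ := 1 + (2 * μ - 2) / (μ * (-(2 * h))) with hLdef
    have hdivpos : (0:ℝ) < (2 * μ - 2) / (μ * (-(2 * h))) := div_pos (by linarith) hP0
    have hL0 : (0:ℝ) < L := by rw [hLdef]; linarith
    have hLmul : ∀ r : ℝ, μ * (-(2 * h)) ≤ r → r + (2 * μ - 2) ≤ L * r := by
      intro r hr
      have h1 : (2 * μ - 2) / (μ * (-(2 * h))) * (μ * (-(2 * h))) = 2 * μ - 2 :=
        div_mul_cancel₀ _ hP0.ne'
      have h2 : (2 * μ - 2) / (μ * (-(2 * h))) * (μ * (-(2 * h)))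
          ≤ (2 * μ - 2) / (μ * (-(2 * h))) * r := mul_le_mul_of_nonneg_left hr hdivpos.le
      calc r + (2 * μ - 2) = r + (2 * μ - 2) / (μ * (-(2 * h))) * (μ * (-(2 * h))) := by
            rw [h1]
        _ ≤ r + (2 * μ - 2) / (μ * (-(2 * h))) * r := by linarith
        _ = L * r := by rw [hLdef]; ring
    have core : ∀ y a b c : ℝ, μ * (x ^ 2 + y ^ 2 - 2 * h) * c = 2 * (μ - 1) * a →
        2 * a * b + 2 * b * c ≤ L * (a ^ 2 + b ^ 2) := by
      intro y a b c hq
      have hRy : (0:ℝ) < μ * (x ^ 2 + y ^ 2 - 2 * h) := mul_pos hμ0 (hRpos x y)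
      have hge : μ * (-(2 * h)) ≤ μ * (x ^ 2 + y ^ 2 - 2 * h) := by
        nlinarith [sq_nonneg x, sq_nonneg y]
      have hLr := hLmul _ hge
      have hmulform : (2 * a * b + 2 * b * c) * (μ * (x ^ 2 + y ^ 2 - 2 * h))
          = 2 * a * b * (μ * (x ^ 2 + y ^ 2 - 2 * h) + (2 * μ - 2)) := by
        linear_combination 2 * b * hq
      have hRHS : 2 * a * b * (μ * (x ^ 2 + y ^ 2 - 2 * h) + (2 * μ - 2))
          ≤ (L * (a ^ 2 + b ^ 2)) * (μ * (x ^ 2 + y ^ 2 - 2 * h)) := by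
        have hMpos : (0:ℝ) ≤ μ * (x ^ 2 + y ^ 2 - 2 * h) + (2 * μ - 2) := by linarith
        rcases le_total 0 (a * b) with hab | hab
        · have e1 : 2 * a * b ≤ a ^ 2 + b ^ 2 := by nlinarith [sq_nonneg (a - b)]
          calc 2 * a * b * (μ * (x ^ 2 + y ^ 2 - 2 * h) + (2 * μ - 2))
              ≤ (a ^ 2 + b ^ 2) * (μ * (x ^ 2 + y ^ 2 - 2 * h) + (2 * μ - 2)) :=
                mul_le_mul_of_nonneg_right e1 hMpos
            _ ≤ (a ^ 2 + b ^ 2) * (L * (μ * (x ^ 2 + y ^ 2 - 2 * h))) :=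
                mul_le_mul_of_nonneg_left hLr (by positivity)
            _ = (L * (a ^ 2 + b ^ 2)) * (μ * (x ^ 2 + y ^ 2 - 2 * h)) := by ring
        · have hle0 : 2 * a * b * (μ * (x ^ 2 + y ^ 2 - 2 * h) + (2 * μ - 2)) ≤ 0 := by
            nlinarith
          have hge0 : (0:ℝ) ≤ (L * (a ^ 2 + b ^ 2)) * (μ * (x ^ 2 + y ^ 2 - 2 * h)) := by
            positivity
          linarith
      rw [← hmulform] at hRHS
      exact le_of_mul_le_mul_right hRHS hRy
    have hub : ∀ y : ℝ, 2 * pdx ξ x y * pdy (pdx ξ) x y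
        + 2 * pdy (pdx ξ) x y * pdy (pdy (pdx ξ)) x y
        ≤ L * ((pdx ξ x y) ^ 2 + (pdy (pdx ξ) x y) ^ 2) := by
      intro y
      have := core y (pdx ξ x y) (pdy (pdx ξ) x y) (pdy (pdy (pdx ξ)) x y) (S2' x y)
      linarith
    have hlb : ∀ y : ℝ, -(L * ((pdx ξ x y) ^ 2 + (pdy (pdx ξ) x y) ^ 2))
        ≤ 2 * pdx ξ x y * pdy (pdx ξ) x y
          + 2 * pdy (pdx ξ) x y * pdy (pdy (pdx ξ)) x y := by
      intro y
      have := core y (pdx ξ x y) (-(pdy (pdx ξ) x y)) (pdy (pdy (pdx ξ)) x y) (S2' x y)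
      nlinarith [this]
    have hEder : ∀ y : ℝ, HasDerivAt (fun t => (pdx ξ x t) ^ 2 + (pdy (pdx ξ) x t) ^ 2)
        (2 * pdx ξ x y * pdy (pdx ξ) x y
          + 2 * pdy (pdx ξ) x y * pdy (pdy (pdx ξ)) x y) y := by
      intro y
      have h1 := (hasDerivAt_pdy Ax x y).pow 2
      have h2 := (hasDerivAt_pdy Ayx x y).pow 2
      refine (h1.add h2).congr_deriv ?_
      push_cast
      ring
    rcases le_total 0 y0 with hy | hy
    · -- forward in y with weight exp(-L t)
      have hg1 : ∀ y : ℝ, HasDerivAt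
          (fun t => ((pdx ξ x t) ^ 2 + (pdy (pdx ξ) x t) ^ 2) * Real.exp (-L * t))
          ((2 * pdx ξ x y * pdy (pdx ξ) x y
              + 2 * pdy (pdx ξ) x y * pdy (pdy (pdx ξ)) x y) * Real.exp (-L * y)
            + ((pdx ξ x y) ^ 2 + (pdy (pdx ξ) x y) ^ 2) * (Real.exp (-L * y) * (-L * 1))) y :=
        fun y => (hEder y).mul (((hasDerivAt_id y).const_mul (-L)).exp)
      have hanti : AntitoneOn
          (fun t => ((pdx ξ x t) ^ 2 + (pdy (pdx ξ) x t) ^ 2) * Real.exp (-L * t))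
          (Set.Ici (0:ℝ)) := by
        apply antitoneOn_of_deriv_nonpos (convex_Ici 0)
        · exact fun t _ => (hg1 t).differentiableAt.continuousAt.continuousWithinAt
        · exact fun t _ => (hg1 t).differentiableAt.differentiableWithinAt
        · intro t ht
          rw [(hg1 t).deriv]
          have hb := hub t
          have hexp := Real.exp_pos (-L * t)
          nlinarith [mul_le_mul_of_nonneg_right hb hexp.le]
      have hle := hanti Set.self_mem_Ici (Set.mem_Ici.mpr hy) hy
      have hstart : ((pdx ξ x 0) ^ 2 + (pdy (pdx ξ) x 0) ^ 2) * Real.exp (-L * 0) = 0 := by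
        rw [hu0 x, hv0 x]; norm_num
      have hge0 : (0:ℝ) ≤ ((pdx ξ x y0) ^ 2 + (pdy (pdx ξ) x y0) ^ 2) * Real.exp (-L * y0) := by
        positivity
      have hE0 : (pdx ξ x y0) ^ 2 + (pdy (pdx ξ) x y0) ^ 2 = 0 := by
        have h0 : ((pdx ξ x y0) ^ 2 + (pdy (pdx ξ) x y0) ^ 2) * Real.exp (-L * y0) = 0 := by
          have hle' : ((pdx ξ x y0) ^ 2 + (pdy (pdx ξ) x y0) ^ 2) * Real.exp (-L * y0)
              ≤ ((pdx ξ x 0) ^ 2 + (pdy (pdx ξ) x 0) ^ 2) * Real.exp (-L * 0) := hle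
          rw [hstart] at hle'
          linarith
        rcases mul_eq_zero.mp h0 with hc | hc
        · exact hc
        · exact absurd hc (Real.exp_pos _).ne'
      have h2 : (pdx ξ x y0) ^ 2 = 0 := by
        nlinarith [hE0, sq_nonneg (pdx ξ x y0), sq_nonneg (pdy (pdx ξ) x y0)]
      exact pow_eq_zero_iff (n := 2) (by norm_num) |>.mp h2
    · -- backward in y with weight exp(L t)
      have hg2 : ∀ y : ℝ, HasDerivAt
          (fun t => ((pdx ξ x t) ^ 2 + (pdy (pdx ξ) x t) ^ 2) * Real.exp (L * t))
          ((2 * pdx ξ x y * pdy (pdx ξ) x y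
              + 2 * pdy (pdx ξ) x y * pdy (pdy (pdx ξ)) x y) * Real.exp (L * y)
            + ((pdx ξ x y) ^ 2 + (pdy (pdx ξ) x y) ^ 2) * (Real.exp (L * y) * (L * 1))) y :=
        fun y => (hEder y).mul (((hasDerivAt_id y).const_mul L).exp)
      have hmono : MonotoneOn
          (fun t => ((pdx ξ x t) ^ 2 + (pdy (pdx ξ) x t) ^ 2) * Real.exp (L * t))
          (Set.Iic (0:ℝ)) := by
        apply monotoneOn_of_deriv_nonneg (convex_Iic 0)
        · exact fun t _ => (hg2 t).differentiableAt.continuousAt.continuousWithinAt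
        · exact fun t _ => (hg2 t).differentiableAt.differentiableWithinAt
        · intro t ht
          rw [(hg2 t).deriv]
          have hb := hlb t
          have hexp := Real.exp_pos (L * t)
          nlinarith [mul_le_mul_of_nonneg_right hb hexp.le]
      have hle := hmono (Set.mem_Iic.mpr hy) Set.self_mem_Iic hy
      have hstart : ((pdx ξ x 0) ^ 2 + (pdy (pdx ξ) x 0) ^ 2) * Real.exp (L * 0) = 0 := by
        rw [hu0 x, hv0 x]; norm_num
      have hge0 : (0:ℝ) ≤ ((pdx ξ x y0) ^ 2 + (pdy (pdx ξ) x y0) ^ 2) * Real.exp (L * y0) := by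
        positivity
      have hE0 : (pdx ξ x y0) ^ 2 + (pdy (pdx ξ) x y0) ^ 2 = 0 := by
        have h0 : ((pdx ξ x y0) ^ 2 + (pdy (pdx ξ) x y0) ^ 2) * Real.exp (L * y0) = 0 := by
          have hle' : ((pdx ξ x y0) ^ 2 + (pdy (pdx ξ) x y0) ^ 2) * Real.exp (L * y0)
              ≤ ((pdx ξ x 0) ^ 2 + (pdy (pdx ξ) x 0) ^ 2) * Real.exp (L * 0) := hle
          rw [hstart] at hle'
          linarith
        rcases mul_eq_zero.mp h0 with hc | hc
        · exact hc
        · exact absurd hc (Real.exp_pos _).ne'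
      have h2 : (pdx ξ x y0) ^ 2 = 0 := by
        nlinarith [hE0, sq_nonneg (pdx ξ x y0), sq_nonneg (pdy (pdx ξ) x y0)]
      exact pow_eq_zero_iff (n := 2) (by norm_num) |>.mp h2
  -- conclusion
  intro x y
  have hBxy : pdx (pdx ξ) x y = 0 := by
    have hrfl : pdx (pdx ξ) x y = deriv (fun x' => pdx ξ x' y) x := rfl
    rw [hrfl, show (fun x' => pdx ξ x' y) = fun _ => (0:ℝ) from funext fun x' => hWzero x' y,
      deriv_const]
  have hfin := heq x y
  rw [hBxy, hWzero x y] at hfin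
  linarith
end
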